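/- arXiv:1703.01330 — 5 statements merged into one kernel-verified Lean document; each statement's English description precedes it below -/
import Mathlib

section
/- Fix real numbers α and n, and for each real m define f_m : ℝ → ℂ by f_m(ω) = e^{-2im·arctan(ω)}·(1+ω²)^{-(α+1)/2}. Then f_n is differentiable on ℝ and for every ω, f_n'(ω) = -(i(α+1)/4)·(f_{n+1}(ω) - f_{n-1}(ω)) - (in/2)·(f_{n+1}(ω) + f_{n-1}(ω) + 2 f_n(ω)). -/
/-!
Both sides are `f_n` times a rational function of `ω`. On the left this is the logarithmic
derivative `-(2in + (α+1)ω)/(1+ω²)`; on the right, `f_{n±1} = f_n e^{∓2i arctan ω}` and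
`e^{±2i arctan ω} = (1 ± iω)²/(1+ω²)`.
-/

open Complex Real

noncomputable def warpedFourier (α m ω : ℝ) : ℂ :=
  cexp (-2 * I * m * (Real.arctan ω : ℂ)) * (((1 + ω ^ 2) ^ (-(α + 1) / 2) : ℝ) : ℂ)

theorem Real.cos_two_mul_arctan (x : ℝ) : cos (2 * arctan x) = (1 - x ^ 2) / (1 + x ^ 2) := by
  rw [cos_two_mul, cos_sq_arctan]
  field_simp
  ring

theorem Real.sin_two_mul_arctan (x : ℝ) : sin (2 * arctan x) = 2 * x / (1 + x ^ 2) := by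
  have h : √(1 + x ^ 2) ^ 2 = 1 + x ^ 2 := sq_sqrt (by positivity)
  rw [sin_two_mul, sin_arctan, cos_arctan]
  field_simp
  rw [h]

theorem Complex.exp_two_mul_I_mul_arctan (x : ℝ) :
    cexp (2 * I * Real.arctan x) = (1 + x * I) ^ 2 / (1 + x ^ 2) := by
  have hx : (1 : ℂ) + x ^ 2 ≠ 0 := by exact_mod_cast (by positivity : (1 : ℝ) + x ^ 2 ≠ 0)
  rw [mul_comm 2 I, mul_assoc, mul_comm, ← ofReal_ofNat, ← ofReal_mul, exp_mul_I,
    ← ofReal_cos, ← ofReal_sin, Real.cos_two_mul_arctan, Real.sin_two_mul_arctan]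
  push_cast
  field_simp
  linear_combination (-(x : ℂ) ^ 2) * I_sq

theorem Complex.exp_neg_two_mul_I_mul_arctan (x : ℝ) :
    cexp (-2 * I * Real.arctan x) = (1 - x * I) ^ 2 / (1 + x ^ 2) := by
  simpa [Real.arctan_neg, sub_eq_add_neg] using exp_two_mul_I_mul_arctan (-x)

theorem warpedFourier_add (α m k ω : ℝ) :
    warpedFourier α (m + k) ω = warpedFourier α m ω * cexp (-2 * I * k * Real.arctan ω) := by
  rw [warpedFourier, warpedFourier, mul_right_comm (cexp _), ← Complex.exp_add, ofReal_add]
  ring_nf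

theorem hasDerivAt_warpedFourier (α m x : ℝ) :
    HasDerivAt (warpedFourier α m)
      (warpedFourier α m x * (-(2 * m * I + (α + 1) * x) / (1 + x ^ 2))) x := by
  have hx : 0 < 1 + x ^ 2 := by positivity
  have hphase := (((Real.hasDerivAt_arctan x).ofReal_comp).const_mul (-2 * I * m)).cexp
  have hweight := (((hasDerivAt_pow 2 x).const_add 1).rpow_const
    (p := -(α + 1) / 2) (Or.inl hx.ne')).ofReal_comp
  refine (hphase.mul hweight).congr_deriv ?_
  rw [warpedFourier, Real.rpow_sub hx, Real.rpow_one]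
  have hxC : (1 : ℂ) + x ^ 2 ≠ 0 := by exact_mod_cast hx.ne'
  push_cast
  field_simp
  ring

/-- The recursion in the Fourier domain: with
`f_m(ω) = e^{-2im arctan ω} (1+ω²)^{-(α+1)/2}`, the function `f_n` is differentiable and
`f_n' = -(i(α+1)/4)(f_{n+1} - f_{n-1}) - (in/2)(f_{n+1} + f_{n-1} + 2 f_n)`. -/
theorem fourier_recursion (α n : ℝ) (f : ℝ → ℝ → ℂ)
    (hf : ∀ m ω, f m ω =
      Complex.exp (-2 * Complex.I * (m : ℂ) * (Real.arctan ω : ℂ)) *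
        (((1 + ω ^ 2) ^ (-(α + 1) / 2) : ℝ) : ℂ)) :
    Differentiable ℝ (f n) ∧
      ∀ ω : ℝ, deriv (f n) ω =
        -(Complex.I * (α + 1) / 4) * (f (n + 1) ω - f (n - 1) ω) -
          (Complex.I * (n : ℂ) / 2) * (f (n + 1) ω + f (n - 1) ω + 2 * f n ω) := by
  obtain rfl : f = warpedFourier α := funext₂ hf
  refine ⟨fun ω => (hasDerivAt_warpedFourier α n ω).differentiableAt, fun ω => ?_⟩
  have hω : (1 : ℂ) + ω ^ 2 ≠ 0 := by exact_mod_cast (by positivity : (1 : ℝ) + ω ^ 2 ≠ 0)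
  have h2 : -2 * I * ((-1 : ℝ) : ℂ) = 2 * I := by push_cast; ring
  rw [(hasDerivAt_warpedFourier α n ω).deriv, sub_eq_add_neg n, warpedFourier_add,
    warpedFourier_add, ofReal_one, mul_one, h2, exp_two_mul_I_mul_arctan,
    exp_neg_two_mul_I_mul_arctan]
  field_simp
  linear_combination (8 * warpedFourier α n ω * ω * (n * ω * I - (α + 1))) * I_sq
end

section
/- Let α > 0 and n ∈ ℝ. For each real m define γ_m : ℝ → ℂ by γ_m(t) = (1/(2π√π)) ∫_ℝ e^{-2im·arctan(ω)} (1+ω²)^{-(α+1)/2} e^{itω} dω (an absolutely convergent integral since α > 0). Then for every real t, ((α+1)/2 + n)·γ_{n+1}(t) + 2(n - t)·γ_n(t) + (n - (α+1)/2)·γ_{n-1}(t) = 0. -/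
open Complex Real MeasureTheory Filter Topology

noncomputable section

namespace GammaRecAux

/-- The integrand of `γ_m(t)`. -/
def F (α m t : ℝ) (ω : ℝ) : ℂ :=
  Complex.exp (-2 * Complex.I * (m : ℂ) * (Real.arctan ω : ℂ)) *
    (((1 + ω ^ 2) ^ (-(α + 1) / 2) : ℝ) : ℂ) *
    Complex.exp (Complex.I * (t : ℂ) * (ω : ℂ))

lemma norm_F (α m t ω : ℝ) : ‖F α m t ω‖ = (1 + ω ^ 2) ^ (-(α + 1) / 2) := by
  have h0 : (0:ℝ) < 1 + ω ^ 2 := by positivity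
  simp only [F, norm_mul, Complex.norm_exp, Complex.norm_real, Real.norm_eq_abs]
  have h1 : (-2 * Complex.I * (m : ℂ) * ((Real.arctan ω : ℝ) : ℂ)).re = 0 := by
    simp [Complex.mul_re, -Complex.ofReal_arctan]
  have h2 : (Complex.I * (t : ℂ) * (ω : ℂ)).re = 0 := by simp [Complex.mul_re]
  rw [h1, h2, Real.exp_zero, one_mul, mul_one,
    _root_.abs_of_nonneg (Real.rpow_nonneg h0.le _)]

lemma continuous_F (α m t : ℝ) : Continuous (F α m t) := by
  apply Continuous.mul
  apply Continuous.mul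
  · exact Complex.continuous_exp.comp
      (continuous_const.mul (Complex.continuous_ofReal.comp Real.continuous_arctan))
  · apply Continuous.comp Complex.continuous_ofReal
    apply Continuous.rpow_const (by fun_prop)
    intro x; left; positivity
  · exact Complex.continuous_exp.comp (by fun_prop)

lemma integrable_F (α : ℝ) (hα : 0 < α) (m t : ℝ) : Integrable (F α m t) := by
  have hnr : ((Module.finrank ℝ ℝ : ℕ) : ℝ) < α + 1 := by
    simp [Module.finrank_self]; linarith
  have h := integrable_rpow_neg_one_add_norm_sq (E := ℝ) (μ := volume) hnr
  refine h.mono' (continuous_F α m t).aestronglyMeasurable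
    (Eventually.of_forall fun ω => ?_)
  rw [norm_F]
  simp only [Real.norm_eq_abs, _root_.sq_abs]
  exact le_of_eq rfl

lemma exp_neg (ω : ℝ) :
    Complex.exp (-2 * Complex.I * ((Real.arctan ω : ℝ) : ℂ)) =
      (1 - Complex.I * ω) ^ 2 / (((1 + ω ^ 2 : ℝ)) : ℂ) := by
  have h0 : (0:ℝ) < 1 + ω ^ 2 := by positivity
  have hne : (((1 + ω ^ 2 : ℝ)) : ℂ) ≠ 0 := Complex.ofReal_ne_zero.mpr h0.ne'
  have hc : Real.cos (2 * Real.arctan ω) = 2 / (1 + ω ^ 2) - 1 := by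
    rw [Real.cos_two_mul, Real.cos_arctan, div_pow, one_pow, Real.sq_sqrt h0.le]; ring
  have hs : Real.sin (2 * Real.arctan ω) = 2 * ω / (1 + ω ^ 2) := by
    rw [Real.sin_two_mul, Real.sin_arctan, Real.cos_arctan]; field_simp; rw [Real.sq_sqrt h0.le]
  have h : -2 * Complex.I * ((Real.arctan ω : ℝ) : ℂ)
      = ((-(2 * Real.arctan ω) : ℝ) : ℂ) * Complex.I := by push_cast; ring
  rw [h, Complex.exp_mul_I, ← Complex.ofReal_cos, ← Complex.ofReal_sin,
    Real.cos_neg, Real.sin_neg, hc, hs]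
  push_cast
  have hne' : (1 : ℂ) + (ω : ℂ) ^ 2 ≠ 0 := by
    intro h'; apply hne; push_cast; rw [h']
  field_simp
  ring_nf
  simp only [Complex.I_sq]
  ring

lemma exp_pos' (ω : ℝ) :
    Complex.exp (2 * Complex.I * ((Real.arctan ω : ℝ) : ℂ)) =
      (1 + Complex.I * ω) ^ 2 / (((1 + ω ^ 2 : ℝ)) : ℂ) := by
  have h0 : (0:ℝ) < 1 + ω ^ 2 := by positivity
  have hne : (((1 + ω ^ 2 : ℝ)) : ℂ) ≠ 0 := Complex.ofReal_ne_zero.mpr h0.ne'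
  have hc : Real.cos (2 * Real.arctan ω) = 2 / (1 + ω ^ 2) - 1 := by
    rw [Real.cos_two_mul, Real.cos_arctan, div_pow, one_pow, Real.sq_sqrt h0.le]; ring
  have hs : Real.sin (2 * Real.arctan ω) = 2 * ω / (1 + ω ^ 2) := by
    rw [Real.sin_two_mul, Real.sin_arctan, Real.cos_arctan]; field_simp; rw [Real.sq_sqrt h0.le]
  have h : 2 * Complex.I * ((Real.arctan ω : ℝ) : ℂ)
      = (((2 * Real.arctan ω) : ℝ) : ℂ) * Complex.I := by push_cast; ring
  rw [h, Complex.exp_mul_I, ← Complex.ofReal_cos, ← Complex.ofReal_sin, hc, hs]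
  push_cast
  have hne' : (1 : ℂ) + (ω : ℂ) ^ 2 ≠ 0 := by
    intro h'; apply hne; push_cast; rw [h']
  field_simp
  ring_nf
  simp only [Complex.I_sq]
  ring

lemma F_succ (α n t ω : ℝ) :
    F α (n + 1) t ω = (1 - Complex.I * ω) ^ 2 / (((1 + ω ^ 2 : ℝ)) : ℂ) * F α n t ω := by
  have : (-2 * Complex.I * ((n + 1 : ℝ) : ℂ) * (Real.arctan ω : ℂ))
      = (-2 * Complex.I * ((Real.arctan ω : ℝ) : ℂ)) +
        (-2 * Complex.I * (n : ℂ) * (Real.arctan ω : ℂ)) := by push_cast; ring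
  rw [F, F, this, Complex.exp_add, exp_neg]
  ring

lemma F_pred (α n t ω : ℝ) :
    F α (n - 1) t ω = (1 + Complex.I * ω) ^ 2 / (((1 + ω ^ 2 : ℝ)) : ℂ) * F α n t ω := by
  have : (-2 * Complex.I * ((n - 1 : ℝ) : ℂ) * (Real.arctan ω : ℂ))
      = (2 * Complex.I * ((Real.arctan ω : ℝ) : ℂ)) +
        (-2 * Complex.I * (n : ℂ) * (Real.arctan ω : ℂ)) := by push_cast; ring
  rw [F, F, this, Complex.exp_add, exp_pos']
  ring

/-- The combination in the recursion, scaled by `1/(2i)`; it is the derivative of `F α n t`. -/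
def D (α n t : ℝ) (ω : ℝ) : ℂ :=
  ((((α + 1) / 2 + n : ℝ) : ℂ) * F α (n + 1) t ω + 2 * ((n - t : ℝ) : ℂ) * F α n t ω +
    ((n - (α + 1) / 2 : ℝ) : ℂ) * F α (n - 1) t ω) / (2 * Complex.I)

lemma hasDerivAt_F (α n t : ℝ) (ω : ℝ) : HasDerivAt (F α n t) (D α n t ω) ω := by
  have h0 : (0:ℝ) < 1 + ω ^ 2 := by positivity
  have hne : (((1 + ω ^ 2 : ℝ)) : ℂ) ≠ 0 := Complex.ofReal_ne_zero.mpr h0.ne'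
  have ha : HasDerivAt (fun ω : ℝ => -2 * Complex.I * (n : ℂ) * ((Real.arctan ω : ℝ) : ℂ))
      (-2 * Complex.I * (n : ℂ) * ((1 / (1 + ω ^ 2) : ℝ) : ℂ)) ω :=
    ((Real.hasDerivAt_arctan ω).ofReal_comp).const_mul _
  have h1 : HasDerivAt
      (fun ω : ℝ => Complex.exp (-2 * Complex.I * (n : ℂ) * ((Real.arctan ω : ℝ) : ℂ)))
      (Complex.exp (-2 * Complex.I * (n : ℂ) * ((Real.arctan ω : ℝ) : ℂ)) *
        (-2 * Complex.I * (n : ℂ) * ((1 / (1 + ω ^ 2) : ℝ) : ℂ))) ω := ha.cexp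
  have hb0 : HasDerivAt (fun ω : ℝ => 1 + ω ^ 2) (2 * ω) ω := by
    simpa using ((hasDerivAt_pow 2 ω).const_add 1)
  have hb : HasDerivAt (fun ω : ℝ => ((1 + ω ^ 2) ^ (-(α + 1) / 2) : ℝ))
      ((2 * ω) * (-(α + 1) / 2) * (1 + ω ^ 2) ^ (-(α + 1) / 2 - 1)) ω :=
    hb0.rpow_const (Or.inl h0.ne')
  have hb' := hb.ofReal_comp
  have hc0 : HasDerivAt (fun ω : ℝ => Complex.I * (t : ℂ) * (ω : ℂ))
      (Complex.I * (t : ℂ)) ω := by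
    simpa using ((Complex.ofRealCLM.hasDerivAt (x := ω)).const_mul (Complex.I * (t : ℂ)))
  have h3 : HasDerivAt (fun ω : ℝ => Complex.exp (Complex.I * (t : ℂ) * (ω : ℂ)))
      (Complex.exp (Complex.I * (t : ℂ) * (ω : ℂ)) * (Complex.I * (t : ℂ))) ω := hc0.cexp
  have hd := (h1.mul hb').mul h3
  refine hd.congr_deriv ?_
  rw [D, F_succ, F_pred]
  rw [show ((1 + ω ^ 2 : ℝ) ^ (-(α + 1) / 2 - 1) : ℝ)
      = ((1 + ω ^ 2) ^ (-(α + 1) / 2)) / (1 + ω ^ 2) from Real.rpow_sub_one h0.ne' _]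
  simp only [F, Pi.mul_apply]
  push_cast
  have hI : (2 : ℂ) * Complex.I ≠ 0 := by simp [Complex.I_ne_zero]
  have hne' : (1 : ℂ) + (ω : ℂ) ^ 2 ≠ 0 := by
    intro h; apply hne; push_cast; rw [h]
  field_simp
  ring_nf
  simp only [Complex.I_sq]
  ring

lemma tendsto_norm_aux (α : ℝ) (hα : 0 < α) (l : Filter ℝ)
    (hl : Tendsto (fun ω : ℝ => ω ^ 2) l atTop) :
    Tendsto (fun ω : ℝ => (1 + ω ^ 2) ^ (-(α + 1) / 2)) l (𝓝 0) := by
  have h1 : Tendsto (fun ω : ℝ => 1 + ω ^ 2) l atTop :=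
    tendsto_atTop_add_const_left _ _ hl
  have h2 : Tendsto (fun x : ℝ => x ^ (-((α + 1) / 2))) atTop (𝓝 0) :=
    tendsto_rpow_neg_atTop (by linarith)
  have h3 := h2.comp h1
  have : (fun ω : ℝ => (1 + ω ^ 2) ^ (-(α + 1) / 2))
      = (fun x : ℝ => x ^ (-((α + 1) / 2))) ∘ fun ω : ℝ => 1 + ω ^ 2 := by
    funext ω; rw [Function.comp_apply, neg_div]
  rw [this]; exact h3

lemma tendsto_F_atTop (α : ℝ) (hα : 0 < α) (m t : ℝ) :
    Tendsto (F α m t) atTop (𝓝 0) := by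
  rw [tendsto_zero_iff_norm_tendsto_zero]
  simp only [norm_F]
  exact tendsto_norm_aux α hα _ (tendsto_pow_atTop two_ne_zero)

lemma tendsto_F_atBot (α : ℝ) (hα : 0 < α) (m t : ℝ) :
    Tendsto (F α m t) atBot (𝓝 0) := by
  rw [tendsto_zero_iff_norm_tendsto_zero]
  simp only [norm_F]
  refine tendsto_norm_aux α hα _ ?_
  have : Tendsto (fun ω : ℝ => |ω| ^ 2) atBot atTop :=
    (tendsto_pow_atTop two_ne_zero).comp tendsto_abs_atBot_atTop
  simpa [sq_abs] using this

lemma integrable_D (α : ℝ) (hα : 0 < α) (n t : ℝ) : Integrable (D α n t) := by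
  unfold D
  exact ((((integrable_F α hα (n + 1) t).const_mul _).add
    ((integrable_F α hα n t).const_mul _)).add
    ((integrable_F α hα (n - 1) t).const_mul _)).div_const _

lemma integral_D_zero (α : ℝ) (hα : 0 < α) (n t : ℝ) : ∫ ω : ℝ, D α n t ω = 0 := by
  have hInt := integrable_D α hα n t
  have h1 : ∫ ω in Set.Ioi (0:ℝ), D α n t ω = 0 - F α n t 0 :=
    integral_Ioi_of_hasDerivAt_of_tendsto' (fun x _ => hasDerivAt_F α n t x)
      hInt.integrableOn (tendsto_F_atTop α hα n t)
  have h2 : ∫ ω in Set.Iic (0:ℝ), D α n t ω = F α n t 0 - 0 :=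
    integral_Iic_of_hasDerivAt_of_tendsto' (fun x _ => hasDerivAt_F α n t x)
      hInt.integrableOn (tendsto_F_atBot α hα n t)
  rw [← intervalIntegral.integral_Iic_add_Ioi (b := (0:ℝ)) hInt.integrableOn hInt.integrableOn, h1, h2]
  ring

end GammaRecAux

open GammaRecAux

/-- The recursion relation for the warped basis functions `γ_m` of `ℋ^α`
(`ψ = arctan` warping), where
`γ_m(t) = (1/(2π√π)) ∫ e^{-2im arctan ω} (1+ω²)^{-(α+1)/2} e^{itω} dω`:
`((α+1)/2 + n) γ_{n+1}(t) + 2(n-t) γ_n(t) + (n-(α+1)/2) γ_{n-1}(t) = 0`. -/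
theorem gamma_recursion (α : ℝ) (hα : 0 < α) (n : ℝ) (γ : ℝ → ℝ → ℂ)
    (hγ : ∀ m t, γ m t =
      (1 / (2 * Real.pi * Real.sqrt Real.pi) : ℝ) *
        ∫ ω : ℝ, Complex.exp (-2 * Complex.I * (m : ℂ) * (Real.arctan ω : ℂ)) *
          (((1 + ω ^ 2) ^ (-(α + 1) / 2) : ℝ) : ℂ) *
          Complex.exp (Complex.I * (t : ℂ) * (ω : ℂ))) :
    ∀ t : ℝ,
      (((α + 1) / 2 + n : ℝ) : ℂ) * γ (n + 1) t + 2 * ((n - t : ℝ) : ℂ) * γ n t +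
        ((n - (α + 1) / 2 : ℝ) : ℂ) * γ (n - 1) t = 0 := by
  intro t
  have hγ' : ∀ m, γ m t = ((1 / (2 * Real.pi * Real.sqrt Real.pi) : ℝ) : ℂ) *
      ∫ ω : ℝ, F α m t ω := fun m => hγ m t
  set c : ℂ := ((1 / (2 * Real.pi * Real.sqrt Real.pi) : ℝ) : ℂ) with hc
  set A : ℂ := (((α + 1) / 2 + n : ℝ) : ℂ) with hA
  set B : ℂ := 2 * ((n - t : ℝ) : ℂ) with hB
  set C : ℂ := ((n - (α + 1) / 2 : ℝ) : ℂ) with hC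
  have hi1 := (integrable_F α hα (n + 1) t).const_mul A
  have hi2 := (integrable_F α hα n t).const_mul B
  have hi3 := (integrable_F α hα (n - 1) t).const_mul C
  have hi12 : Integrable (fun ω : ℝ => A * F α (n + 1) t ω + B * F α n t ω) := hi1.add hi2
  have hsum : A * (∫ ω : ℝ, F α (n + 1) t ω) + B * (∫ ω : ℝ, F α n t ω) +
      C * (∫ ω : ℝ, F α (n - 1) t ω)
      = ∫ ω : ℝ, (A * F α (n + 1) t ω + B * F α n t ω + C * F α (n - 1) t ω) := by
    rw [integral_add hi12 hi3, integral_add hi1 hi2,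
      integral_const_mul, integral_const_mul, integral_const_mul]
  have hptw : ∀ ω : ℝ, A * F α (n + 1) t ω + B * F α n t ω + C * F α (n - 1) t ω
      = (2 * Complex.I) * D α n t ω := by
    intro ω
    have hI : (2 : ℂ) * Complex.I ≠ 0 := by simp [Complex.I_ne_zero]
    rw [D, mul_comm (2 * Complex.I), div_mul_cancel₀ _ hI, hA, hB, hC]
  have hz : (∫ ω : ℝ, (A * F α (n + 1) t ω + B * F α n t ω + C * F α (n - 1) t ω)) = 0 := by
    simp only [hptw]
    rw [integral_const_mul, integral_D_zero α hα n t, mul_zero]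
  calc A * γ (n + 1) t + B * γ n t + C * γ (n - 1) t
      = c * (A * (∫ ω : ℝ, F α (n + 1) t ω) + B * (∫ ω : ℝ, F α n t ω) +
          C * (∫ ω : ℝ, F α (n - 1) t ω)) := by
        rw [hγ' (n + 1), hγ' n, hγ' (n - 1)]; ring
    _ = 0 := by rw [hsum, hz, mul_zero]
end
end

section
/- Let p be a positive integer and a a natural number with p - a > 1. Then for every t < 0, ∫_ℝ e^{itω} (1-iω)^{a} (1+iω)^{-p} dω = 0. (Equivalently: the inverse Fourier transform of ω ↦ (1+iω)^{-p}(1-iω)^{-q} vanishes on (-∞,0) whenever q = -a is a nonpositive integer and p+q > 1.) -/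
/-!
For `n : ℕ`, the one-sided function `x ↦ xⁿ e^{-2πx} 1_{x > 0}` has Fourier transform
`ξ ↦ n! (2π)^{-(n+1)} (1 + iξ)^{-(n+1)}`, a Laplace transform of a monomial. For `n ≥ 1` this is
integrable, so Fourier inversion at the point `t / 2π < 0`, where the one-sided function vanishes,
gives `∫ e^{itω} (1 + iω)^{-m} dω = 0` for every `m ≥ 2`. Writing `1 - iω = 2 - (1 + iω)` and
expanding binomially turns the integrand into a combination of such terms with
`m = p - k ≥ p - a ≥ 2`.
-/

open Complex Real MeasureTheory

open Set Filter Topology FourierTransform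
open scoped Nat

section OneSided

variable {c : ℂ}

lemma norm_pow_mul_cexp_neg_mul {x : ℝ} (hx : 0 ≤ x) (n : ℕ) :
    ‖(x : ℂ) ^ n * cexp (-(c * x))‖ = x ^ n * Real.exp (-c.re * x) := by
  rw [norm_mul, norm_pow, norm_exp, norm_real, Real.norm_of_nonneg hx]
  simp

lemma integrableOn_Ioi_pow_mul_cexp_neg_mul (hc : 0 < c.re) (n : ℕ) :
    IntegrableOn (fun x : ℝ => (x : ℂ) ^ n * cexp (-(c * x))) (Ioi 0) := by
  have hreal : IntegrableOn (fun x : ℝ => x ^ (n : ℝ) * Real.exp (-c.re * x ^ (1 : ℝ))) (Ioi 0) :=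
    integrableOn_rpow_mul_exp_neg_mul_rpow (neg_one_lt_zero.trans_le n.cast_nonneg) one_pos hc
  refine Integrable.congr' hreal (by fun_prop) ?_
  filter_upwards [ae_restrict_mem measurableSet_Ioi] with x (hx : 0 < x)
  rw [Real.rpow_one, Real.rpow_natCast, norm_pow_mul_cexp_neg_mul hx.le,
    Real.norm_of_nonneg (by positivity)]

lemma tendsto_pow_mul_cexp_neg_mul_atTop (hc : 0 < c.re) (n : ℕ) :
    Tendsto (fun x : ℝ => (x : ℂ) ^ n * cexp (-(c * x))) atTop (𝓝 0) := by
  rw [tendsto_zero_iff_norm_tendsto_zero]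
  refine (tendsto_rpow_mul_exp_neg_mul_atTop_nhds_zero n c.re hc).congr' ?_
  filter_upwards [eventually_ge_atTop 0] with x hx
  rw [norm_pow_mul_cexp_neg_mul hx, Real.rpow_natCast]

lemma hasDerivAt_pow_mul_cexp_neg_mul (c : ℂ) (n : ℕ) (x : ℝ) :
    HasDerivAt (fun x : ℝ => (x : ℂ) ^ n * cexp (-(c * x)))
      (n * ((x : ℂ) ^ (n - 1) * cexp (-(c * x))) - c * ((x : ℂ) ^ n * cexp (-(c * x)))) x := by
  have hpow : HasDerivAt (fun x : ℝ => (x : ℂ) ^ n) (n * (x : ℂ) ^ (n - 1)) x :=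
    (hasDerivAt_pow n (x : ℂ)).comp_ofReal
  have hexp : HasDerivAt (fun x : ℝ => cexp (-(c * x))) (cexp (-(c * x)) * -c) x := by
    simpa using ((hasDerivAt_id (x : ℂ)).const_mul c).neg.cexp.comp_ofReal
  exact (hpow.mul hexp).congr_deriv (by ring)

lemma integral_Ioi_pow_mul_cexp_neg_mul (hc : 0 < c.re) (n : ℕ) :
    ∫ x in Ioi (0 : ℝ), (x : ℂ) ^ n * cexp (-(c * x)) = n ! / c ^ (n + 1) := by
  have hc0 : c ≠ 0 := fun h => by simp [h] at hc
  have hint := integrableOn_Ioi_pow_mul_cexp_neg_mul hc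
  have recurrence (n : ℕ) : n * (∫ x in Ioi (0 : ℝ), (x : ℂ) ^ (n - 1) * cexp (-(c * x)))
      - c * ∫ x in Ioi (0 : ℝ), (x : ℂ) ^ n * cexp (-(c * x)) = -(0 : ℂ) ^ n := by
    have := integral_Ioi_of_hasDerivAt_of_tendsto'
      (fun x _ => hasDerivAt_pow_mul_cexp_neg_mul c n x)
      (((hint (n - 1)).const_mul _).sub ((hint n).const_mul _))
      (tendsto_pow_mul_cexp_neg_mul_atTop hc n)
    rw [integral_sub ((hint (n - 1)).const_mul _) ((hint n).const_mul _), integral_const_mul,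
      integral_const_mul] at this
    simpa using this
  induction n with
  | zero =>
    have := recurrence 0
    simp only [CharP.cast_eq_zero, zero_mul, zero_sub, pow_zero, one_mul, neg_inj] at this
    rw [eq_div_iff (pow_ne_zero _ hc0)]
    simpa [mul_comm] using this
  | succ n ih =>
    have := recurrence (n + 1)
    rw [Nat.add_sub_cancel, ih, zero_pow n.succ_ne_zero, neg_zero, sub_eq_zero] at this
    rw [eq_div_iff (pow_ne_zero _ hc0), Nat.factorial_succ]
    field_simp at this
    push_cast at this ⊢
    linear_combination -this

lemma fourier_indicator_Ioi_pow_mul_cexp_neg_mul (hc : 0 < c.re) (n : ℕ) (ξ : ℝ) :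
    𝓕 ((Ioi 0).indicator fun x : ℝ => (x : ℂ) ^ n * cexp (-(c * x))) ξ
      = n ! / (c + 2 * π * ξ * I) ^ (n + 1) := by
  calc 𝓕 ((Ioi 0).indicator fun x : ℝ => (x : ℂ) ^ n * cexp (-(c * x))) ξ
      = ∫ x in Ioi (0 : ℝ), (x : ℂ) ^ n * cexp (-((c + 2 * π * ξ * I) * x)) := by
        rw [Real.fourier_real_eq_integral_exp_smul, ← integral_indicator measurableSet_Ioi]
        congr 1 with x
        by_cases hx : x ∈ Ioi 0
        · simp only [indicator_of_mem hx, smul_eq_mul]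
          rw [mul_left_comm, ← Complex.exp_add]
          push_cast
          ring_nf
        · simp [indicator_of_notMem hx]
    _ = n ! / (c + 2 * π * ξ * I) ^ (n + 1) :=
        integral_Ioi_pow_mul_cexp_neg_mul (by simpa using hc) n

end OneSided

lemma one_add_I_mul_ne_zero (ω : ℝ) : 1 + I * ω ≠ 0 :=
  fun h => by simpa using congrArg re h

lemma fourier_indicator_Ioi_pow_mul_cexp_neg_two_pi_mul (n : ℕ) (ξ : ℝ) :
    𝓕 ((Ioi 0).indicator fun x : ℝ => (x : ℂ) ^ n * cexp (-((2 * π : ℝ) * x))) ξ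
      = n ! / (2 * π : ℝ) ^ (n + 1) * ((1 + I * ξ) ^ (n + 1))⁻¹ := by
  rw [fourier_indicator_Ioi_pow_mul_cexp_neg_mul (by simp [Real.pi_pos]) n ξ]
  have hfactor : ((2 * π : ℝ) : ℂ) + 2 * π * ξ * I = (2 * π : ℝ) * (1 + I * ξ) := by
    push_cast
    ring
  rw [hfactor, mul_pow, ← div_div, div_eq_mul_inv _ ((1 + I * ξ) ^ (n + 1))]

lemma one_add_sq_le_norm_one_add_I_mul_pow {m : ℕ} (hm : 2 ≤ m) (ω : ℝ) :
    1 + ω ^ 2 ≤ ‖(1 + I * ω) ^ m‖ := by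
  have hnorm : ‖1 + I * ω‖ = √(1 + ω ^ 2) := by
    simpa [mul_comm] using norm_add_mul_I 1 ω
  have hsq : ‖1 + I * ω‖ ^ 2 = 1 + ω ^ 2 := by
    rw [hnorm, Real.sq_sqrt (by positivity)]
  have hone : 1 ≤ ‖1 + I * ω‖ := by
    rw [hnorm, Real.one_le_sqrt]
    nlinarith [sq_nonneg ω]
  rw [norm_pow, ← hsq]
  exact pow_le_pow_right₀ hone hm

lemma integrable_inv_one_add_I_mul_pow {m : ℕ} (hm : 2 ≤ m) :
    Integrable fun ω : ℝ => ((1 + I * ω) ^ m)⁻¹ := by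
  refine integrable_inv_one_add_sq.mono' ?_ (.of_forall fun ω => ?_)
  · exact (Continuous.inv₀ (by fun_prop) fun ω => pow_ne_zero _ (one_add_I_mul_ne_zero ω))
      |>.aestronglyMeasurable
  · rw [norm_inv]
    exact inv_anti₀ (by positivity) (one_add_sq_le_norm_one_add_I_mul_pow hm ω)

lemma integrable_cexp_mul_inv_one_add_I_mul_pow {m : ℕ} (hm : 2 ≤ m) (t : ℝ) :
    Integrable fun ω : ℝ => cexp (I * t * ω) * ((1 + I * ω) ^ m)⁻¹ := by
  refine (integrable_inv_one_add_I_mul_pow hm).bdd_mul (c := 1) (by fun_prop)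
    (.of_forall fun ω => ?_)
  rw [show I * t * ω = ((t * ω : ℝ) : ℂ) * I by push_cast; ring, norm_exp_ofReal_mul_I]

lemma integral_cexp_mul_inv_one_add_I_mul_pow_eq_zero {m : ℕ} (hm : 2 ≤ m) {t : ℝ}
    (ht : t < 0) : ∫ ω : ℝ, cexp (I * t * ω) * ((1 + I * ω) ^ m)⁻¹ = 0 := by
  obtain ⟨n, rfl⟩ : ∃ n, m = n + 1 := ⟨m - 1, by omega⟩
  set f := (Ioi 0).indicator fun x : ℝ => (x : ℂ) ^ n * cexp (-((2 * π : ℝ) * x))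
  set C : ℂ := n ! / (2 * π : ℝ) ^ (n + 1)
  have hFf : 𝓕 f = fun ξ : ℝ => C * ((1 + I * ξ) ^ (n + 1))⁻¹ :=
    funext (fourier_indicator_Ioi_pow_mul_cexp_neg_two_pi_mul n)
  have hf : Integrable f := by
    rw [integrable_indicator_iff measurableSet_Ioi]
    exact integrableOn_Ioi_pow_mul_cexp_neg_mul (by simp [Real.pi_pos]) n
  have hs : t / (2 * π) < 0 := div_neg_of_neg_of_pos ht (by positivity)
  have hzero (x : ℝ) (hx : x < 0) : f x = 0 := indicator_of_notMem (not_lt.2 hx.le) _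
  have hcont : ContinuousAt f (t / (2 * π)) :=
    (continuousAt_const (y := 0)).congr <| by
      filter_upwards [Iio_mem_nhds hs] with x hx
      exact (hzero x hx).symm
  have hinv := hf.fourierInv_fourier_eq
    (hFf ▸ (integrable_inv_one_add_I_mul_pow (by omega)).const_mul C) hcont
  rw [Real.fourierInv_eq', hFf, hzero _ hs] at hinv
  have hC : C ≠ 0 := by simp [C, Real.pi_ne_zero, Nat.factorial_ne_zero]
  refine (mul_eq_zero.1 ?_).resolve_left hC
  rw [← hinv, ← integral_const_mul]
  congr 1 with ω
  have hphase : 2 * π * (ω * (t / (2 * π))) = t * ω := by field_simp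
  rw [Real.inner_apply, hphase, smul_eq_mul]
  push_cast
  ring_nf

lemma sub_pow_mul_inv_pow {K : Type*} [Field K] (w z : K) {a p : ℕ} (hz : z ≠ 0)
    (hap : a ≤ p) :
    (w - z) ^ a * (z ^ p)⁻¹
      = ∑ k ∈ Finset.range (a + 1), ((-1) ^ k * w ^ (a - k) * a.choose k) * (z ^ (p - k))⁻¹ := by
  rw [sub_eq_neg_add, add_pow, Finset.sum_mul]
  refine Finset.sum_congr rfl fun k hk => ?_
  have hkp : k ≤ p := by have := Finset.mem_range.1 hk; omega
  rw [pow_sub₀ _ hz hkp, neg_pow]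
  field_simp

/-- If `p` is a positive integer, `a` a natural number with `p - a > 1`, then for `t < 0`
`∫ e^{itω} (1-iω)^a (1+iω)^{-p} dω = 0`: the inverse Fourier transform of
`(1+iω)^{-p}(1-iω)^{-q}` vanishes on `(-∞,0)` when `q = -a` is a nonpositive integer
and `p + q > 1`. -/
theorem inverse_fourier_vanishes_on_negatives (p a : ℕ) (hpa : 1 < (p : ℝ) - (a : ℝ))
    (t : ℝ) (ht : t < 0) :
    (∫ ω : ℝ, Complex.exp (Complex.I * (t : ℂ) * (ω : ℂ)) *
        (1 - Complex.I * (ω : ℂ)) ^ a *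
        (1 + Complex.I * (ω : ℂ)) ^ (-(p : ℂ))) = 0 := by
  have hap : a + 2 ≤ p := by
    have : a + 1 < p := by exact_mod_cast (by linarith : (a : ℝ) + 1 < p)
    omega
  have hdeg {k : ℕ} (hk : k ∈ Finset.range (a + 1)) : 2 ≤ p - k := by
    have := Finset.mem_range.1 hk; omega
  have hexpand (ω : ℝ) : cexp (I * t * ω) * (1 - I * ω) ^ a * (1 + I * ω) ^ (-(p : ℂ))
      = ∑ k ∈ Finset.range (a + 1), ((-1) ^ k * 2 ^ (a - k) * a.choose k)
          * (cexp (I * t * ω) * ((1 + I * ω) ^ (p - k))⁻¹) := by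
    rw [cpow_neg, cpow_natCast, mul_assoc, show 1 - I * ω = 2 - (1 + I * ω) by ring,
      sub_pow_mul_inv_pow _ _ (one_add_I_mul_ne_zero ω) (by omega), Finset.mul_sum]
    exact Finset.sum_congr rfl fun k _ => by ring
  simp_rw [hexpand]
  rw [integral_finsetSum _ fun k hk =>
    (integrable_cexp_mul_inv_one_add_I_mul_pow (hdeg hk) t).const_mul _]
  refine Finset.sum_eq_zero fun k hk => ?_
  rw [integral_const_mul, integral_cexp_mul_inv_one_add_I_mul_pow_eq_zero (hdeg hk) ht, mul_zero]
end

section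
/- Let β > 1/2, c₁ = (π/2)/∫_0^{∞}(1+v²)^{-β}dv, ψ(ω) = c₁ ∫_0^{ω} (1+v²)^{-β} dv, and let φ : (-π/2, π/2) → ℝ be the инverse function of ψ. Then (π/2 - u)^{1/(2β-1)} · φ(u) tends to (c₁/(2β-1))^{1/(2β-1)} as u → (π/2)⁻. -/
open Real MeasureTheory Filter

/-- Asymptotics of the inverse warping function: with
`c₁ = (π/2)/∫_0^∞(1+v²)^{-β}dv`, `ψ(ω) = c₁∫_0^ω(1+v²)^{-β}dv` and `φ` the inverse of `ψ`
on `(-π/2, π/2)`, one has `(π/2 - u)^{1/(2β-1)} φ(u) → (c₁/(2β-1))^{1/(2β-1)}`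
as `u → (π/2)⁻`. -/
theorem inverse_warping_asymptotics (β : ℝ) (hβ : 1 / 2 < β) (c₁ : ℝ)
    (hc₁ : c₁ = (Real.pi / 2) / ∫ v in Set.Ioi (0 : ℝ), (1 + v ^ 2) ^ (-β))
    (ψ : ℝ → ℝ)
    (hψ : ∀ ω : ℝ, ψ ω = c₁ * ∫ v in (0 : ℝ)..ω, (1 + v ^ 2) ^ (-β))
    (φ : ℝ → ℝ) (hφ : ∀ ω : ℝ, φ (ψ ω) = ω) :
    Tendsto (fun u : ℝ => (Real.pi / 2 - u) ^ (1 / (2 * β - 1)) * φ u)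
      (nhdsWithin (Real.pi / 2) (Set.Iio (Real.pi / 2)))
      (nhds ((c₁ / (2 * β - 1)) ^ (1 / (2 * β - 1)))) := by
  have h2β : (0:ℝ) < 2 * β - 1 := by linarith
  set p : ℝ := 1 / (2 * β - 1) with hp
  set f : ℝ → ℝ := fun v => (1 + v ^ 2) ^ (-β) with hfdef
  have hfpos : ∀ v : ℝ, 0 < f v := fun v => Real.rpow_pos_of_pos (by positivity) _
  have hfc : Continuous f := by
    apply Continuous.rpow_const (by continuity)
    intro x; exact Or.inl (by positivity)
  have hint : ∀ a b : ℝ, IntervalIntegrable f volume a b :=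
    fun a b => hfc.intervalIntegrable a b
  -- comparison with v ^ (-(2β))
  have hsq : ∀ v : ℝ, 0 < v → (v ^ 2 : ℝ) ^ (-β) = v ^ (-(2*β)) := by
    intro v hv
    rw [← Real.rpow_natCast v 2, ← Real.rpow_mul hv.le]
    norm_num
  have hbound : ∀ v : ℝ, 1 ≤ v → f v ≤ v ^ (-(2*β)) := by
    intro v hv
    have hv0 : (0:ℝ) < v := lt_of_lt_of_le one_pos hv
    rw [← hsq v hv0]
    exact Real.rpow_le_rpow_of_nonpos (by positivity) (by nlinarith) (by linarith)
  have hrint : ∀ a : ℝ, 0 < a → IntegrableOn (fun v : ℝ => v ^ (-(2*β))) (Set.Ioi a) :=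
    fun a ha => integrableOn_Ioi_rpow_of_lt (by linarith) ha
  have hIioInt : ∀ a : ℝ, 0 ≤ a → IntegrableOn f (Set.Ioi a) := by
    intro a ha
    have h2 : IntegrableOn f (Set.Ioi (max a 1)) := by
      apply Integrable.mono (hrint (max a 1) (lt_of_lt_of_le one_pos (le_max_right a 1)))
      · exact hfc.aestronglyMeasurable.restrict
      · filter_upwards [ae_restrict_mem measurableSet_Ioi] with v hv
        have hv1 : 1 ≤ v := le_of_lt (lt_of_le_of_lt (le_max_right a 1) hv)
        have hv0 : (0:ℝ) < v := lt_of_lt_of_le one_pos hv1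
        rw [Real.norm_eq_abs, Real.norm_eq_abs, abs_of_pos (hfpos v),
          abs_of_pos (Real.rpow_pos_of_pos hv0 _)]
        exact hbound v hv1
    have heq : Set.Ioi a = Set.Ioc a (max a 1) ∪ Set.Ioi (max a 1) :=
      (Set.Ioc_union_Ioi_eq_Ioi (le_max_left a 1)).symm
    rw [heq]
    exact (hfc.integrableOn_Ioc).union h2
  set T : ℝ → ℝ := fun a => ∫ v in Set.Ioi a, f v with hTdef
  have hTpos : ∀ a : ℝ, 0 ≤ a → 0 < T a := by
    intro a ha
    rw [hTdef]
    rw [setIntegral_pos_iff_support_of_nonneg_ae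
      (Filter.Eventually.of_forall fun v => (hfpos v).le) (hIioInt a ha)]
    have hsupp : Function.support f ∩ Set.Ioi a = Set.Ioi a :=
      Set.inter_eq_self_of_subset_right fun v _ => Function.mem_support.mpr (hfpos v).ne'
    rw [hsupp, Real.volume_Ioi]
    simp
  have hIpos : 0 < T 0 := hTpos 0 le_rfl
  have hc₁pos : 0 < c₁ := by
    rw [hc₁]
    exact div_pos (by positivity) hIpos
  have hsplit : ∀ ω : ℝ, 0 ≤ ω → T 0 = (∫ v in (0:ℝ)..ω, f v) + T ω := by
    intro ω hω
    have hu := setIntegral_union (f := f) (μ := volume) (s := Set.Ioc (0:ℝ) ω) Set.Ioc_disjoint_Ioi_same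
      measurableSet_Ioi (hfc.integrableOn_Ioc) (hIioInt ω hω)
    rw [Set.Ioc_union_Ioi_eq_Ioi hω] at hu
    rw [intervalIntegral.integral_of_le hω]
    exact hu
  have hc₁' : c₁ = Real.pi / 2 / T 0 := hc₁
  have hc₁T0 : c₁ * T 0 = Real.pi / 2 := by
    rw [hc₁']
    field_simp
  have hψT : ∀ ω : ℝ, 0 ≤ ω → Real.pi / 2 - ψ ω = c₁ * T ω := by
    intro ω hω
    have := hsplit ω hω
    rw [hψ ω, ← hc₁T0]
    have hiv : (∫ v in (0:ℝ)..ω, (1 + v ^ 2) ^ (-β)) = ∫ v in (0:ℝ)..ω, f v := rfl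
    rw [hiv]
    nlinarith [this]
  have hψlt : ∀ ω : ℝ, 0 ≤ ω → ψ ω < Real.pi / 2 := by
    intro ω hω
    have := hψT ω hω
    nlinarith [hTpos ω hω]
  -- strict monotonicity and continuity of ψ
  have hψmono : StrictMono ψ := by
    intro a b hab
    have hsub : ψ b - ψ a = c₁ * ∫ v in a..b, f v := by
      rw [hψ a, hψ b, ← mul_sub]
      congr 1
      exact intervalIntegral.integral_interval_sub_left (hint 0 b) (hint 0 a)
    nlinarith [intervalIntegral.intervalIntegral_pos_of_pos (hint a b) hfpos hab]
  have hψcont : Continuous ψ := by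
    have : ψ = fun ω => c₁ * ∫ v in (0:ℝ)..ω, f v := funext hψ
    rw [this]
    exact continuous_const.mul (intervalIntegral.continuous_primitive hint 0)
  -- the tail integral bounds
  have hUB : ∀ ω : ℝ, 1 ≤ ω → T ω ≤ ω ^ (1 - 2*β) / (2*β - 1) := by
    intro ω hω
    have hω0 : (0:ℝ) < ω := lt_of_lt_of_le one_pos hω
    have h1 : T ω ≤ ∫ v in Set.Ioi ω, v ^ (-(2*β)) := by
      apply setIntegral_mono_on (hIioInt ω hω0.le) (hrint ω hω0) measurableSet_Ioi
      intro v hv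
      exact hbound v (le_of_lt (lt_of_le_of_lt hω hv))
    have h2 : (∫ v in Set.Ioi ω, v ^ (-(2*β))) = ω ^ (1 - 2*β) / (2*β - 1) := by
      rw [integral_Ioi_rpow_of_lt (by linarith) hω0,
        show -(2*β) + 1 = 1 - 2*β by ring,
        show (1 - 2*β : ℝ) = -(2*β - 1) by ring]
      have hne : (2*β - 1 : ℝ) ≠ 0 := h2β.ne'
      have hne2 : (1 - 2*β : ℝ) ≠ 0 := by intro h; apply hne; linarith
      field_simp
    linarith [h1, h2.le, h2.ge]
  -- pointwise lower bound
  have hkey : ∀ t : ℝ, 0 < t → (1 + t^2) ^ (-β) * t ^ (2*β) = ((1 + t^2)/t^2) ^ (-β) := by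
    intro t ht
    rw [Real.div_rpow (by positivity) (by positivity), hsq t ht,
      Real.rpow_neg ht.le, div_inv_eq_mul]
  have hLBpt : ∀ ω v : ℝ, 1 ≤ ω → ω ≤ v →
      (1 + ω^2) ^ (-β) * ω ^ (2*β) * v ^ (-(2*β)) ≤ f v := by
    intro ω v hω hv
    have hω0 : (0:ℝ) < ω := lt_of_lt_of_le one_pos hω
    have hv0 : (0:ℝ) < v := lt_of_lt_of_le hω0 hv
    have hmono : (1 + v^2)/v^2 ≤ (1 + ω^2)/ω^2 := by
      rw [div_le_div_iff₀ (by positivity) (by positivity)]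
      nlinarith
    have h1 : ((1 + ω^2)/ω^2 : ℝ) ^ (-β) ≤ ((1 + v^2)/v^2) ^ (-β) :=
      Real.rpow_le_rpow_of_nonpos (by positivity) hmono (by linarith)
    have h2 : (1 + ω^2 : ℝ) ^ (-β) * ω ^ (2*β) ≤ (1 + v^2) ^ (-β) * v ^ (2*β) := by
      rw [hkey ω hω0, hkey v hv0]; exact h1
    have h3 : (0:ℝ) < v ^ (-(2*β)) := Real.rpow_pos_of_pos hv0 _
    have h4 : v ^ (2*β) * v ^ (-(2*β)) = 1 := by
      rw [← Real.rpow_add hv0]; norm_num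
    calc (1 + ω^2) ^ (-β) * ω ^ (2*β) * v ^ (-(2*β))
        ≤ (1 + v^2) ^ (-β) * v ^ (2*β) * v ^ (-(2*β)) := by
          exact mul_le_mul_of_nonneg_right h2 h3.le
      _ = f v := by rw [mul_assoc, h4, mul_one]
  have hLB : ∀ ω : ℝ, 1 ≤ ω →
      (1 + ω^2) ^ (-β) * ω ^ (2*β) * (ω ^ (1 - 2*β) / (2*β - 1)) ≤ T ω := by
    intro ω hω
    have hω0 : (0:ℝ) < ω := lt_of_lt_of_le one_pos hω
    have h2 : (∫ v in Set.Ioi ω, (1 + ω^2) ^ (-β) * ω ^ (2*β) * v ^ (-(2*β)))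
        = (1 + ω^2) ^ (-β) * ω ^ (2*β) * (ω ^ (1 - 2*β) / (2*β - 1)) := by
      rw [MeasureTheory.integral_const_mul, integral_Ioi_rpow_of_lt (by linarith) hω0,
        show -(2*β) + 1 = 1 - 2*β by ring,
        show (1 - 2*β : ℝ) = -(2*β - 1) by ring]
      have hne : (2*β - 1 : ℝ) ≠ 0 := h2β.ne'
      have hne2 : (1 - 2*β : ℝ) ≠ 0 := by intro h; apply hne; linarith
      field_simp
    rw [← h2]
    apply setIntegral_mono_on ((hrint ω hω0).const_mul _) (hIioInt ω hω0.le) measurableSet_Ioi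
    intro v hv
    exact hLBpt ω v hω (le_of_lt hv)
  -- the squeeze limit for c₁ * T ω * ω^(2β-1)
  have hone : Tendsto (fun ω : ℝ => (1 + ω^2) ^ (-β) * ω ^ (2*β)) atTop (nhds 1) := by
    have h1 : Tendsto (fun ω : ℝ => (1 + ω^2)/ω^2) atTop (nhds 1) := by
      have h2 : Tendsto (fun ω : ℝ => (ω⁻¹)^2 + 1) atTop (nhds 1) := by
        have := (tendsto_inv_atTop_zero (𝕜 := ℝ)).pow 2
        simpa using this.add tendsto_const_nhds
      apply h2.congr'
      filter_upwards [eventually_gt_atTop (0:ℝ)] with ω hω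
      field_simp
    have hcont : ContinuousAt (fun x : ℝ => x ^ (-β)) 1 :=
      Real.continuousAt_rpow_const 1 (-β) (Or.inl one_ne_zero)
    have h3 := (hcont.tendsto.comp h1)
    rw [Real.one_rpow] at h3
    apply h3.congr'
    filter_upwards [eventually_ge_atTop (1:ℝ)] with ω hω
    exact (hkey ω (lt_of_lt_of_le one_pos hω)).symm
  have hA : Tendsto (fun ω : ℝ => c₁ * T ω * ω ^ (2*β - 1)) atTop
      (nhds (c₁ / (2*β - 1))) := by
    have hlow : Tendsto (fun ω : ℝ => c₁ * ((1 + ω^2) ^ (-β) * ω ^ (2*β)) / (2*β - 1))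
        atTop (nhds (c₁ / (2*β - 1))) := by
      have := (hone.const_mul c₁).div_const (2*β - 1)
      simpa using this
    apply tendsto_of_tendsto_of_tendsto_of_le_of_le' hlow tendsto_const_nhds
    · filter_upwards [eventually_ge_atTop (1:ℝ)] with ω hω
      have hω0 : (0:ℝ) < ω := lt_of_lt_of_le one_pos hω
      have h4 : ω ^ (1 - 2*β) * ω ^ (2*β - 1) = 1 := by
        rw [← Real.rpow_add hω0]; norm_num
      have h5 := mul_le_mul_of_nonneg_right
        (mul_le_mul_of_nonneg_left (hLB ω hω) hc₁pos.le)
        (Real.rpow_pos_of_pos hω0 (2*β - 1)).le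
      calc c₁ * ((1 + ω^2) ^ (-β) * ω ^ (2*β)) / (2*β - 1)
          = c₁ * ((1 + ω^2) ^ (-β) * ω ^ (2*β) * (ω ^ (1 - 2*β) / (2*β - 1)))
            * ω ^ (2*β - 1) := by
            linear_combination (-(c₁ * ((1 + ω^2) ^ (-β) * ω ^ (2*β))) / (2*β - 1)) * h4
        _ ≤ c₁ * T ω * ω ^ (2*β - 1) := h5
    · filter_upwards [eventually_ge_atTop (1:ℝ)] with ω hω
      have hω0 : (0:ℝ) < ω := lt_of_lt_of_le one_pos hω
      have h4 : ω ^ (1 - 2*β) * ω ^ (2*β - 1) = 1 := by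
        rw [← Real.rpow_add hω0]; norm_num
      have h5 := mul_le_mul_of_nonneg_right
        (mul_le_mul_of_nonneg_left (hUB ω hω) hc₁pos.le)
        (Real.rpow_pos_of_pos hω0 (2*β - 1)).le
      calc c₁ * T ω * ω ^ (2*β - 1)
          ≤ c₁ * (ω ^ (1 - 2*β) / (2*β - 1)) * ω ^ (2*β - 1) := h5
        _ = c₁ / (2*β - 1) := by
            linear_combination (c₁ / (2*β - 1)) * h4
  -- limit of ψ at infinity
  have hT0 : Tendsto (fun ω : ℝ => c₁ * T ω) atTop (nhds 0) := by
    have hup : Tendsto (fun ω : ℝ => c₁ * (ω ^ (1 - 2*β) / (2*β - 1))) atTop (nhds 0) := by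
      have h0 : Tendsto (fun ω : ℝ => ω ^ (-(2*β - 1))) atTop (nhds 0) :=
        tendsto_rpow_neg_atTop h2β
      have h1 := (h0.div_const (2*β - 1)).const_mul c₁
      simp only [mul_zero, zero_div] at h1
      apply h1.congr'
      filter_upwards with ω
      rw [show -(2*β - 1) = 1 - 2*β by ring]
    apply tendsto_of_tendsto_of_tendsto_of_le_of_le' tendsto_const_nhds hup
    · filter_upwards [eventually_ge_atTop (0:ℝ)] with ω hω
      exact mul_nonneg hc₁pos.le (hTpos ω hω).le
    · filter_upwards [eventually_ge_atTop (1:ℝ)] with ω hω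
      exact mul_le_mul_of_nonneg_left (hUB ω hω) hc₁pos.le
  have hψtop : Tendsto ψ atTop (nhds (Real.pi / 2)) := by
    have h1 : Tendsto (fun ω : ℝ => Real.pi / 2 - c₁ * T ω) atTop (nhds (Real.pi / 2 - 0)) :=
      tendsto_const_nhds.sub hT0
    rw [sub_zero] at h1
    apply h1.congr'
    filter_upwards [eventually_ge_atTop (0:ℝ)] with ω hω
    have := hψT ω hω
    linarith
  -- surjectivity onto left neighborhoods
  have hsurj : ∀ N : ℝ, ∀ u : ℝ, ψ N < u → u < Real.pi / 2 →
      ∃ ω : ℝ, N < ω ∧ ψ ω = u := by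
    intro N u hNu hu
    obtain ⟨M, hM1, hM2⟩ : ∃ M : ℝ, u < ψ M ∧ N ≤ M := by
      have := (hψtop.eventually (eventually_gt_nhds hu)).and (eventually_ge_atTop N)
      obtain ⟨M, h⟩ := this.exists
      exact ⟨M, h.1, h.2⟩
    have hsub := intermediate_value_Ioo hM2 hψcont.continuousOn
    have : u ∈ Set.Ioo (ψ N) (ψ M) := ⟨hNu, hM1⟩
    obtain ⟨ω, hω, hωu⟩ := hsub this
    exact ⟨ω, hω.1, hωu⟩
  -- Tendsto φ at π/2⁻ : atTop
  have h1 : Tendsto φ (nhdsWithin (Real.pi / 2) (Set.Iio (Real.pi / 2))) atTop := by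
    rw [tendsto_atTop]
    intro N
    set N' := max N 1 with hN'
    have hN'0 : (0:ℝ) ≤ N' := le_trans zero_le_one (le_max_right N 1)
    have hψN' : ψ N' < Real.pi / 2 := hψlt N' hN'0
    filter_upwards [Ioo_mem_nhdsLT hψN'] with u hu
    obtain ⟨ω, hω, hωu⟩ := hsurj N' u hu.1 hu.2
    have : φ u = ω := by rw [← hωu, hφ]
    rw [this]
    exact le_trans (le_max_left N 1) hω.le
  -- limit of g(ω) = (π/2 - ψ ω)^p * ω
  have hg : Tendsto (fun ω : ℝ => (Real.pi / 2 - ψ ω) ^ p * ω) atTop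
      (nhds ((c₁ / (2*β - 1)) ^ p)) := by
    have hcont : ContinuousAt (fun x : ℝ => x ^ p) (c₁ / (2*β - 1)) :=
      Real.continuousAt_rpow_const _ p (Or.inl (by positivity))
    have h2 := hcont.tendsto.comp hA
    apply h2.congr'
    filter_upwards [eventually_ge_atTop (1:ℝ)] with ω hω
    have hω0 : (0:ℝ) < ω := lt_of_lt_of_le one_pos hω
    have hTω : 0 ≤ c₁ * T ω := mul_nonneg hc₁pos.le (hTpos ω (by linarith)).le
    have h3 : (ω ^ (2*β - 1)) ^ p = ω := by
      rw [← Real.rpow_mul hω0.le, hp, mul_one_div, div_self h2β.ne', Real.rpow_one]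
    simp only [Function.comp_apply]
    rw [Real.mul_rpow hTω (Real.rpow_pos_of_pos hω0 _).le, h3,
      hψT ω (by linarith : (0:ℝ) ≤ ω)]
  -- eventual equality and conclusion
  have hfinal := hg.comp h1
  apply hfinal.congr'
  have hψ1 : ψ 1 < Real.pi / 2 := hψlt 1 zero_le_one
  filter_upwards [Ioo_mem_nhdsLT hψ1] with u hu
  obtain ⟨ω, hω, hωu⟩ := hsurj 1 u hu.1 hu.2
  have hφu : φ u = ω := by rw [← hωu, hφ]
  simp only [Function.comp_apply]
  rw [hφu, hωu]
end

section
/- Let β > 1/2, α ≥ 0, m a positive integer and μ > 0. Let ψ(ω) = c₁∫_0^{ω}(1+v²)^{-β}dv with c₁ = (π/2)/∫_0^{∞}(1+v²)^{-β}dv, and let φ : (-π/2,π/2) → ℝ be the inverse of ψ. Let F : ℝ → ℂ be m times differentiable with |F^{(j)}(ω)| ≤ C(1+|ω|)^{-(μ+j)} for all ω and all 0 ≤ j ≤ m. Define g : (-π/2,π/2) → ℂ by g(u) = F(φ(u)) · (φ'(u))^{(α+1)/2}. Then g is m times differentiable and for each 0 ≤ k ≤ m there is a constant C_k with |g^{(k)}(u)|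 ≤ C_k (π/2 - |u|)^{(μ - β(α+1))/(2β-1) - k} for all u ∈ (-π/2, π/2). -/
open Real MeasureTheory Filter
open Topology

namespace WarpAux

lemma one_le_base (x : ℝ) : (1:ℝ) ≤ 1 + |x| := by simp [abs_nonneg]

lemma base_pos (x : ℝ) : (0:ℝ) < 1 + |x| := lt_of_lt_of_le one_pos (one_le_base x)

lemma rpow_exp_mono {x : ℝ} {s s' : ℝ} (h : s ≤ s') : (1+|x|) ^ s ≤ (1+|x|) ^ s' :=
  Real.rpow_le_rpow_of_exponent_le (one_le_base x) h

/-- iterated derivative of a sum, assuming only repeated differentiability. -/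
lemma iteratedDeriv_add' {F : Type*} [NormedAddCommGroup F] [NormedSpace ℝ F] :
    ∀ (n : ℕ) (f g : ℝ → F), (∀ i < n, Differentiable ℝ (iteratedDeriv i f)) →
    (∀ i < n, Differentiable ℝ (iteratedDeriv i g)) →
    iteratedDeriv n (fun x => f x + g x) = fun x => iteratedDeriv n f x + iteratedDeriv n g x := by
  intro n
  induction n with
  | zero => intro f g _ _; simp
  | succ n ih =>
    intro f g hf hg
    have hd : (fun x => f x + g x) = f + g := rfl
    have h1 : deriv (fun x => f x + g x) = fun x => deriv f x + deriv g x := by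
      funext x
      have hfx : DifferentiableAt ℝ f x := by
        have := hf 0 (Nat.succ_pos n) x; rwa [iteratedDeriv_zero] at this
      have hgx : DifferentiableAt ℝ g x := by
        have := hg 0 (Nat.succ_pos n) x; rwa [iteratedDeriv_zero] at this
      exact deriv_add hfx hgx
    rw [iteratedDeriv_succ', h1,
      ih (deriv f) (deriv g)
        (fun i hi => by rw [← iteratedDeriv_succ']; exact hf (i+1) (Nat.succ_lt_succ hi))
        (fun i hi => by rw [← iteratedDeriv_succ']; exact hg (i+1) (Nat.succ_lt_succ hi))]
    funext x
    rw [iteratedDeriv_succ', iteratedDeriv_succ']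

/-- class of n-times differentiable functions with polynomial-type decay bounds. -/
def Dk (n : ℕ) (s : ℝ) (h : ℝ → ℂ) : Prop :=
  (∀ i < n, Differentiable ℝ (iteratedDeriv i h)) ∧
  ∀ i ≤ n, ∃ C : ℝ, 0 ≤ C ∧ ∀ x : ℝ, ‖iteratedDeriv i h x‖ ≤ C * (1 + |x|) ^ (s - i)

/-- class of smooth functions with symbol-type bounds of order t. -/
def Sm (t : ℝ) (φ : ℝ → ℂ) : Prop :=
  ContDiff ℝ (⊤ : ℕ∞) φ ∧
  ∀ j : ℕ, ∃ C : ℝ, 0 ≤ C ∧ ∀ x : ℝ, ‖iteratedDeriv j φ x‖ ≤ C * (1 + |x|) ^ (t - j)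

lemma Dk.congr_exp {n s s' h} (hss : s = s') (hd : Dk n s h) : Dk n s' h := hss ▸ hd

lemma Dk.mono_exp {n s s' h} (hss : s ≤ s') (hd : Dk n s h) : Dk n s' h := by
  refine ⟨hd.1, fun i hi => ?_⟩
  obtain ⟨C, hC0, hC⟩ := hd.2 i hi
  exact ⟨C, hC0, fun x => (hC x).trans (by
    have := rpow_exp_mono (x := x) (sub_le_sub_right hss i)
    nlinarith [Real.rpow_nonneg (base_pos x).le (s - i)])⟩

lemma Dk.of_le {n n' s h} (hnn : n' ≤ n) (hd : Dk n s h) : Dk n' s h :=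
  ⟨fun i hi => hd.1 i (lt_of_lt_of_le hi hnn), fun i hi => hd.2 i (le_trans hi hnn)⟩

lemma Dk.add {n s f g} (hf : Dk n s f) (hg : Dk n s g) : Dk n s (fun x => f x + g x) := by
  constructor
  · intro i hi
    rw [iteratedDeriv_add' i f g (fun j hj => hf.1 j (hj.trans hi)) (fun j hj => hg.1 j (hj.trans hi))]
    exact ((hf.1 i hi).add (hg.1 i hi))
  · intro i hi
    obtain ⟨C, hC0, hC⟩ := hf.2 i hi
    obtain ⟨D, hD0, hD⟩ := hg.2 i hi
    refine ⟨C + D, by linarith, fun x => ?_⟩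
    rw [iteratedDeriv_add' i f g (fun j hj => hf.1 j (lt_of_lt_of_le hj hi))
      (fun j hj => hg.1 j (lt_of_lt_of_le hj hi))]
    calc ‖iteratedDeriv i f x + iteratedDeriv i g x‖
        ≤ ‖iteratedDeriv i f x‖ + ‖iteratedDeriv i g x‖ := norm_add_le _ _
      _ ≤ C * (1+|x|) ^ (s - i) + D * (1+|x|) ^ (s - i) := add_le_add (hC x) (hD x)
      _ = (C + D) * (1+|x|) ^ (s - i) := by ring

lemma Dk.deriv {n s h} (hd : Dk (n+1) s h) : Dk n (s-1) (deriv h) := by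
  constructor
  · intro i hi
    rw [← iteratedDeriv_succ']
    exact hd.1 (i+1) (Nat.succ_lt_succ hi)
  · intro i hi
    obtain ⟨C, hC0, hC⟩ := hd.2 (i+1) (Nat.succ_le_succ hi)
    refine ⟨C, hC0, fun x => ?_⟩
    rw [← iteratedDeriv_succ']
    have : s - (i+1 : ℕ) = s - 1 - i := by push_cast; ring
    rw [this] at hC
    exact hC x

lemma Sm.deriv {t φ} (hs : Sm t φ) : Sm (t-1) (deriv φ) := by
  refine ⟨(contDiff_infty_iff_deriv.mp hs.1).2, fun j => ?_⟩
  obtain ⟨C, hC0, hC⟩ := hs.2 (j+1)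
  refine ⟨C, hC0, fun x => ?_⟩
  rw [← iteratedDeriv_succ']
  have : t - (j+1 : ℕ) = t - 1 - j := by push_cast; ring
  rw [this] at hC
  exact hC x

lemma Sm.toDk {t φ} (n : ℕ) (hs : Sm t φ) : Dk n t φ :=
  ⟨fun i _ => hs.1.differentiable_iteratedDeriv i
      (by exact_mod_cast ENat.coe_lt_top i), fun i _ => hs.2 i⟩


lemma Dk.mul {t φ} (hs : Sm t φ) : ∀ (n : ℕ) {s : ℝ} {h : ℝ → ℂ}, Dk n s h →
    Dk n (s + t) (fun x => φ x * h x) := by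
  intro n
  induction n generalizing t φ with
  | zero =>
    intro s h hd
    refine ⟨fun i hi => absurd hi (Nat.not_lt_zero i), fun i hi => ?_⟩
    interval_cases i
    obtain ⟨C, hC0, hC⟩ := hs.2 0
    obtain ⟨D, hD0, hD⟩ := hd.2 0 le_rfl
    refine ⟨C * D, mul_nonneg hC0 hD0, fun x => ?_⟩
    have h1 := hC x
    have h2 := hD x
    simp only [iteratedDeriv_zero] at h1 h2 ⊢
    calc ‖φ x * h x‖ = ‖φ x‖ * ‖h x‖ := norm_mul _ _
      _ ≤ (C * (1+|x|) ^ (t - (0:ℕ))) * (D * (1+|x|) ^ (s - (0:ℕ))) := by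
          apply mul_le_mul h1 h2 (norm_nonneg _)
          positivity
      _ = C * D * ((1+|x|) ^ (t - (0:ℕ)) * (1+|x|) ^ (s - (0:ℕ))) := by ring
      _ = C * D * (1+|x|) ^ (s + t - (0:ℕ)) := by
          rw [← Real.rpow_add (base_pos x)]; ring_nf
  | succ n ih =>
    intro s h hd
    have hφd : Differentiable ℝ φ := hs.1.differentiable (by simp)
    have hhd : Differentiable ℝ h := by
      have := hd.1 0 (Nat.succ_pos n); rwa [iteratedDeriv_zero] at this
    have hder : _root_.deriv (fun x => φ x * h x) =
        fun x => (fun x => _root_.deriv φ x * h x) x + (fun x => φ x * _root_.deriv h x) x := by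
      funext x
      exact deriv_mul (hφd x) (hhd x)
    have hA : Dk n ((s + t) - 1) (fun x => _root_.deriv φ x * h x) :=
      (ih hs.deriv (hd.of_le n.le_succ)).congr_exp (by ring)
    have hB : Dk n ((s + t) - 1) (fun x => φ x * _root_.deriv h x) :=
      (ih hs hd.deriv).congr_exp (by ring)
    have hAB := hA.add hB
    constructor
    · intro i hi
      match i with
      | 0 =>
        rw [iteratedDeriv_zero]; exact hφd.mul hhd
      | (j+1) =>
        rw [iteratedDeriv_succ', hder]
        exact hAB.1 j (Nat.succ_lt_succ_iff.mp hi)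
    · intro i hi
      match i with
      | 0 =>
        obtain ⟨C, hC0, hC⟩ := hs.2 0
        obtain ⟨D, hD0, hD⟩ := hd.2 0 (Nat.zero_le _)
        refine ⟨C * D, mul_nonneg hC0 hD0, fun x => ?_⟩
        have h1 := hC x; have h2 := hD x
        simp only [iteratedDeriv_zero] at h1 h2 ⊢
        calc ‖φ x * h x‖ = ‖φ x‖ * ‖h x‖ := norm_mul _ _
          _ ≤ (C * (1+|x|) ^ (t - (0:ℕ))) * (D * (1+|x|) ^ (s - (0:ℕ))) := by
              apply mul_le_mul h1 h2 (norm_nonneg _)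
              positivity
          _ = C * D * ((1+|x|) ^ (t - (0:ℕ)) * (1+|x|) ^ (s - (0:ℕ))) := by ring
          _ = C * D * (1+|x|) ^ (s + t - (0:ℕ)) := by
              rw [← Real.rpow_add (base_pos x)]; ring_nf
      | (j+1) =>
        obtain ⟨C, hC0, hC⟩ := hAB.2 j (Nat.succ_le_succ_iff.mp hi)
        refine ⟨C, hC0, fun x => ?_⟩
        rw [iteratedDeriv_succ', hder]
        have := hC x
        have hexp : s + t - 1 - (j:ℝ) = s + t - ((j+1:ℕ):ℝ) := by push_cast; ring
        rwa [hexp] at this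


/-- real-valued symbol class -/
def SmR (t : ℝ) (f : ℝ → ℝ) : Prop :=
  ContDiff ℝ (⊤ : ℕ∞) f ∧
  ∀ j : ℕ, ∃ C : ℝ, 0 ≤ C ∧ ∀ x : ℝ, |iteratedDeriv j f x| ≤ C * (1 + |x|) ^ (t - j)

lemma ofReal_iteratedDeriv {f : ℝ → ℝ} (hf : ContDiff ℝ (⊤ : ℕ∞) f) (n : ℕ) :
    iteratedDeriv n (fun x => (f x : ℂ)) = fun x => ((iteratedDeriv n f x : ℝ) : ℂ) := by
  induction n with
  | zero => simp
  | succ n ih =>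
    rw [iteratedDeriv_succ, ih]
    funext x
    have hd : DifferentiableAt ℝ (iteratedDeriv n f) x :=
      (hf.differentiable_iteratedDeriv n (by exact_mod_cast ENat.coe_lt_top n) x)
    have := (hd.hasDerivAt.ofReal_comp).deriv
    rw [this, ← iteratedDeriv_succ]

lemma SmR.toSm {t : ℝ} {f : ℝ → ℝ} (h : SmR t f) : Sm t (fun x => (f x : ℂ)) := by
  refine ⟨Complex.ofRealCLM.contDiff.comp h.1, fun j => ?_⟩
  obtain ⟨C, hC0, hC⟩ := h.2 j
  refine ⟨C, hC0, fun x => ?_⟩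
  rw [ofReal_iteratedDeriv h.1 j]
  simpa [Complex.norm_real] using hC x

lemma SmR.const_mul {t : ℝ} {f : ℝ → ℝ} (h : SmR t f) (c : ℝ) :
    SmR t (fun x => c * f x) := by
  refine ⟨h.1.const_smul c, fun j => ?_⟩
  obtain ⟨C, hC0, hC⟩ := h.2 j
  refine ⟨|c| * C, by positivity, fun x => ?_⟩
  have : iteratedDeriv j (fun x => c * f x) x = c * iteratedDeriv j f x := by
    simp only [← iteratedDerivWithin_univ]
    exact iteratedDerivWithin_const_mul (Set.mem_univ x) uniqueDiffOn_univ c ((h.1.of_le (by exact_mod_cast le_top)).contDiffWithinAt)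
  rw [this, abs_mul, mul_assoc]
  exact mul_le_mul_of_nonneg_left (hC x) (abs_nonneg c)

lemma SmR.sub {t : ℝ} {f g : ℝ → ℝ} (hf : SmR t f) (hg : SmR t g) :
    SmR t (fun x => f x - g x) := by
  refine ⟨hf.1.sub hg.1, fun j => ?_⟩
  obtain ⟨C, hC0, hC⟩ := hf.2 j
  obtain ⟨D, hD0, hD⟩ := hg.2 j
  refine ⟨C + D, by linarith, fun x => ?_⟩
  have : iteratedDeriv j (fun x => f x - g x) x = iteratedDeriv j f x - iteratedDeriv j g x := by
    simp only [← iteratedDerivWithin_univ]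
    exact iteratedDerivWithin_sub (Set.mem_univ x) uniqueDiffOn_univ
      ((hf.1.of_le (by exact_mod_cast le_top)).contDiffWithinAt)
      ((hg.1.of_le (by exact_mod_cast le_top)).contDiffWithinAt)
  rw [this]
  calc |iteratedDeriv j f x - iteratedDeriv j g x|
      ≤ |iteratedDeriv j f x| + |iteratedDeriv j g x| := abs_sub _ _
    _ ≤ C * (1+|x|) ^ (t - j) + D * (1+|x|) ^ (t - j) := add_le_add (hC x) (hD x)
    _ = (C + D) * (1+|x|) ^ (t - j) := by ring

lemma SmR.mono_exp {t t' : ℝ} {f : ℝ → ℝ} (htt : t ≤ t') (h : SmR t f) : SmR t' f := by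
  refine ⟨h.1, fun j => ?_⟩
  obtain ⟨C, hC0, hC⟩ := h.2 j
  refine ⟨C, hC0, fun x => (hC x).trans ?_⟩
  exact mul_le_mul_of_nonneg_left (rpow_exp_mono (by linarith)) hC0


lemma one_add_sq_pos (x : ℝ) : (0:ℝ) < 1 + x^2 := by positivity

lemma q_smooth (p : ℝ) : ContDiff ℝ (⊤ : ℕ∞) (fun x : ℝ => (1+x^2) ^ p) :=
  ((contDiff_const.add (contDiff_id.pow 2)).rpow_const_of_ne
    (fun x => (one_add_sq_pos x).ne'))

lemma r_smooth (p : ℝ) : ContDiff ℝ (⊤ : ℕ∞) (fun x : ℝ => x * (1+x^2) ^ p) :=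
  contDiff_id.mul (q_smooth p)

lemma q_deriv (p : ℝ) :
    deriv (fun x : ℝ => (1+x^2) ^ p) = fun x => (2*p) * (x * (1+x^2) ^ (p-1)) := by
  funext x
  have h1 : HasDerivAt (fun x : ℝ => 1 + x^2) (2*x) x := by
    simpa using ((hasDerivAt_pow 2 x).const_add 1)
  have h2 := h1.rpow_const (p := p) (Or.inl (one_add_sq_pos x).ne')
  rw [h2.deriv]; ring

lemma key_split (p : ℝ) (x : ℝ) : (1+x^2) ^ p = (1+x^2) * (1+x^2) ^ (p-1) := by
  nth_rewrite 1 [show p = 1 + (p-1) by ring]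
  rw [Real.rpow_add (one_add_sq_pos x), Real.rpow_one]

lemma r_deriv (p : ℝ) : deriv (fun x : ℝ => x * (1+x^2) ^ p) =
    fun x => (1+2*p) * (1+x^2) ^ p - (2*p) * (1+x^2) ^ (p-1) := by
  funext x
  have h1 : HasDerivAt (fun x : ℝ => 1 + x^2) (2*x) x := by
    simpa using ((hasDerivAt_pow 2 x).const_add 1)
  have h2 := h1.rpow_const (p := p) (Or.inl (one_add_sq_pos x).ne')
  have h3 : HasDerivAt (fun y : ℝ => y * (1+y^2) ^ p)
      (1 * (1 + x ^ 2) ^ p + x * (2 * x * p * (1 + x ^ 2) ^ (p - 1))) x :=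
    (hasDerivAt_id x).mul h2
  rw [h3.deriv]
  have key := key_split p x
  linear_combination (-(2*p)) * key

lemma q0_bound (p : ℝ) : ∃ C : ℝ, 0 ≤ C ∧ ∀ x : ℝ,
    (1+x^2) ^ p ≤ C * (1+|x|) ^ (2*p) := by
  rcases le_or_gt 0 p with hp | hp
  · refine ⟨1, zero_le_one, fun x => ?_⟩
    rw [one_mul]
    calc (1+x^2) ^ p ≤ ((1+|x|)^2 : ℝ) ^ p := by
          apply Real.rpow_le_rpow (one_add_sq_pos x).le _ hp
          nlinarith [abs_nonneg x, sq_abs x]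
      _ = (1+|x|) ^ (2*p) := by
          rw [← Real.rpow_natCast (1+|x|) 2, ← Real.rpow_mul (base_pos x).le]
          norm_num
  · refine ⟨(2:ℝ) ^ (-p), (Real.rpow_nonneg (by norm_num) _), fun x => ?_⟩
    have hsq : ((1+|x|)^2 : ℝ) ≤ 2 * (1+x^2) := by nlinarith [abs_nonneg x, sq_abs x, sq_nonneg (1-|x|)]
    have h1 : ((1+|x|) : ℝ) ^ (2*p) = (((1+|x|)^2 : ℝ)) ^ p := by
      rw [← Real.rpow_natCast (1+|x|) 2, ← Real.rpow_mul (base_pos x).le]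
      norm_num
    have h2 : (((1+|x|)^2 : ℝ)) ^ p ≥ (2 * (1+x^2)) ^ p :=
      Real.rpow_le_rpow_of_nonpos (by positivity) hsq hp.le
    have h3 : (2 * (1+x^2) : ℝ) ^ p = 2 ^ p * (1+x^2) ^ p :=
      Real.mul_rpow (by norm_num) (one_add_sq_pos x).le
    have h4 : (0:ℝ) < 2 ^ p := Real.rpow_pos_of_pos (by norm_num) p
    have h5 : (2:ℝ) ^ (-p) * 2 ^ p = 1 := by
      rw [← Real.rpow_add (by norm_num : (0:ℝ) < 2)]; simp
    calc (1+x^2) ^ p = (2:ℝ)^(-p) * (2 ^ p * (1+x^2) ^ p) := by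
          rw [← mul_assoc, h5, one_mul]
      _ = (2:ℝ)^(-p) * (2 * (1+x^2)) ^ p := by rw [h3]
      _ ≤ (2:ℝ)^(-p) * (1+|x|) ^ (2*p) := by
          rw [h1]
          exact mul_le_mul_of_nonneg_left h2 (Real.rpow_nonneg (by norm_num) _)

lemma qr_bound : ∀ (j : ℕ) (p : ℝ), ∃ C : ℝ, 0 ≤ C ∧ ∀ x : ℝ,
    |iteratedDeriv j (fun x : ℝ => (1+x^2) ^ p) x| ≤ C * (1+|x|) ^ (2*p - j) ∧
    |iteratedDeriv j (fun x : ℝ => x * (1+x^2) ^ p) x| ≤ C * (1+|x|) ^ (2*p + 1 - j) := by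
  intro j
  induction j with
  | zero =>
    intro p
    obtain ⟨C, hC0, hC⟩ := q0_bound p
    refine ⟨C, hC0, fun x => ?_⟩
    have hq := hC x
    have hqpos : (0:ℝ) < (1+x^2) ^ p := Real.rpow_pos_of_pos (one_add_sq_pos x) p
    constructor
    · simpa [iteratedDeriv_zero, abs_of_pos hqpos, Nat.cast_zero, sub_zero] using hq
    · simp only [iteratedDeriv_zero, Nat.cast_zero, sub_zero]
      rw [abs_mul, abs_of_pos hqpos]
      calc |x| * (1+x^2) ^ p ≤ (1+|x|) * (C * (1+|x|) ^ (2*p)) := by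
            apply mul_le_mul (by linarith [abs_nonneg x]) hq hqpos.le (base_pos x).le
        _ = C * ((1+|x|) ^ (2*p) * (1+|x|) ^ (1:ℝ)) := by rw [Real.rpow_one]; ring
        _ = C * (1+|x|) ^ (2*p + 1) := by rw [← Real.rpow_add (base_pos x)]
  | succ j ih =>
    intro p
    obtain ⟨C, hC0, hC⟩ := ih (p-1)
    obtain ⟨D, hD0, hD⟩ := ih p
    refine ⟨(2*(abs p))*C + ((abs (1+2*p))*D + (2*(abs p))*C), by positivity, fun x => ?_⟩
    have e1 : iteratedDeriv (j+1) (fun x : ℝ => (1+x^2) ^ p) x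
        = (2*p) * iteratedDeriv j (fun x : ℝ => x * (1+x^2) ^ (p-1)) x := by
      rw [iteratedDeriv_succ', q_deriv p]
      simp only [← iteratedDerivWithin_univ]
      exact iteratedDerivWithin_const_mul (Set.mem_univ x) uniqueDiffOn_univ _
        (((r_smooth (p-1)).of_le (by exact_mod_cast le_top)).contDiffWithinAt)
    have e2 : iteratedDeriv (j+1) (fun x : ℝ => x * (1+x^2) ^ p) x
        = (1+2*p) * iteratedDeriv j (fun x : ℝ => (1+x^2) ^ p) x
          - (2*p) * iteratedDeriv j (fun x : ℝ => (1+x^2) ^ (p-1)) x := by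
      rw [iteratedDeriv_succ', r_deriv p]
      simp only [← iteratedDerivWithin_univ]
      rw [show (fun x : ℝ => (1+2*p) * (1+x^2) ^ p - (2*p) * (1+x^2) ^ (p-1))
          = (fun x : ℝ => (1+2*p) * (1+x^2) ^ p) - (fun x : ℝ => (2*p) * (1+x^2) ^ (p-1)) from rfl,
        iteratedDerivWithin_sub (Set.mem_univ x) uniqueDiffOn_univ
          (((contDiff_const.mul (q_smooth p)).of_le (by exact_mod_cast le_top)).contDiffWithinAt)
          (((contDiff_const.mul (q_smooth (p-1))).of_le (by exact_mod_cast le_top)).contDiffWithinAt),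
        iteratedDerivWithin_const_mul (Set.mem_univ x) uniqueDiffOn_univ _
          (((q_smooth p).of_le (by exact_mod_cast le_top)).contDiffWithinAt),
        iteratedDerivWithin_const_mul (Set.mem_univ x) uniqueDiffOn_univ _
          (((q_smooth (p-1)).of_le (by exact_mod_cast le_top)).contDiffWithinAt)]
    constructor
    · rw [e1, abs_mul]
      have := (hC x).2
      have hexp : 2*(p-1) + 1 - (j:ℝ) = 2*p - ((j+1:ℕ):ℝ) := by push_cast; ring
      rw [hexp] at this
      calc |2*p| * |iteratedDeriv j (fun x : ℝ => x * (1+x^2) ^ (p-1)) x|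
          ≤ ((2*(abs p))) * (C * (1+|x|) ^ (2*p - ((j+1:ℕ):ℝ))) := by
            rw [abs_mul, abs_two]
            exact mul_le_mul_of_nonneg_left this (by positivity)
        _ = ((2*(abs p))*C) * (1+|x|) ^ (2*p - ((j+1:ℕ):ℝ)) := by ring
        _ ≤ ((2*(abs p))*C + ((abs (1+2*p))*D + (2*(abs p))*C)) * (1+|x|) ^ (2*p - ((j+1:ℕ):ℝ)) := by
            apply mul_le_mul_of_nonneg_right _ (Real.rpow_nonneg (base_pos x).le _)
            nlinarith [mul_nonneg (abs_nonneg (1+2*p)) hD0, mul_nonneg (abs_nonneg p) hC0]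
    · rw [e2]
      have h1 := (hD x).1
      have h2 := (hC x).1
      have hexp1 : 2*p - (j:ℝ) = 2*p + 1 - ((j+1:ℕ):ℝ) := by push_cast; ring
      have hexp2 : 2*(p-1) - (j:ℝ) ≤ 2*p + 1 - ((j+1:ℕ):ℝ) := by push_cast; linarith
      rw [hexp1] at h1
      have h2' : |iteratedDeriv j (fun x : ℝ => (1+x^2) ^ (p-1)) x|
          ≤ C * (1+|x|) ^ (2*p + 1 - ((j+1:ℕ):ℝ)) :=
        h2.trans (mul_le_mul_of_nonneg_left (rpow_exp_mono hexp2) hC0)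
      calc |(1+2*p) * iteratedDeriv j (fun x : ℝ => (1+x^2) ^ p) x
          - (2*p) * iteratedDeriv j (fun x : ℝ => (1+x^2) ^ (p-1)) x|
          ≤ (abs (1+2*p)) * |iteratedDeriv j (fun x : ℝ => (1+x^2) ^ p) x|
            + (2*(abs p)) * |iteratedDeriv j (fun x : ℝ => (1+x^2) ^ (p-1)) x| := by
            calc _ ≤ |(1+2*p) * iteratedDeriv j (fun x : ℝ => (1+x^2) ^ p) x|
                + |(2*p) * iteratedDeriv j (fun x : ℝ => (1+x^2) ^ (p-1)) x| := abs_sub _ _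
              _ = _ := by rw [abs_mul, abs_mul, abs_mul, abs_two]
          _ ≤ (abs (1+2*p)) * (D * (1+|x|) ^ (2*p + 1 - ((j+1:ℕ):ℝ)))
            + (2*(abs p)) * (C * (1+|x|) ^ (2*p + 1 - ((j+1:ℕ):ℝ))) := by
            apply add_le_add
            · exact mul_le_mul_of_nonneg_left h1 (abs_nonneg _)
            · exact mul_le_mul_of_nonneg_left h2' (by positivity)
          _ ≤ ((2*(abs p))*C + ((abs (1+2*p))*D + (2*(abs p))*C)) * (1+|x|) ^ (2*p + 1 - ((j+1:ℕ):ℝ)) := by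
            nlinarith [Real.rpow_nonneg (base_pos x).le (2*p + 1 - ((j+1:ℕ):ℝ)),
              mul_nonneg (mul_nonneg (abs_nonneg p) hC0) (Real.rpow_nonneg (base_pos x).le (2*p + 1 - ((j+1:ℕ):ℝ)))]

lemma q_SmR (p : ℝ) : SmR (2*p) (fun x : ℝ => (1+x^2) ^ p) :=
  ⟨q_smooth p, fun j => by
    obtain ⟨C, hC0, hC⟩ := qr_bound j p
    exact ⟨C, hC0, fun x => (hC x).1⟩⟩


section psi
variable {β : ℝ}

lemma w_cont : Continuous (fun v : ℝ => (1+v^2) ^ (-β)) :=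
  Continuous.rpow_const (by continuity) (fun x => Or.inl (one_add_sq_pos x).ne')

lemma w_pos (v : ℝ) : 0 < (1+v^2) ^ (-β) := Real.rpow_pos_of_pos (one_add_sq_pos v) _

lemma w_le (hβ : 1/2 < β) {v : ℝ} (hv : 1 ≤ v) : (1+v^2) ^ (-β) ≤ v ^ (-(2*β)) := by
  have hv0 : (0:ℝ) < v := lt_of_lt_of_le one_pos hv
  have h1 : ((v^2 : ℝ)) ^ (-β) = v ^ (-(2*β)) := by
    rw [← Real.rpow_natCast v 2, ← Real.rpow_mul hv0.le]
    norm_num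
  rw [← h1]
  exact Real.rpow_le_rpow_of_nonpos (by positivity) (by linarith [sq_nonneg v]) (by linarith)

lemma ge_w (hβ : 1/2 < β) {v : ℝ} (hv : 1 ≤ v) :
    (2:ℝ) ^ (-β) * v ^ (-(2*β)) ≤ (1+v^2) ^ (-β) := by
  have hv0 : (0:ℝ) < v := lt_of_lt_of_le one_pos hv
  have h1 : ((v^2 : ℝ)) ^ (-β) = v ^ (-(2*β)) := by
    rw [← Real.rpow_natCast v 2, ← Real.rpow_mul hv0.le]
    norm_num
  have h2 : ((2 * v^2 : ℝ)) ^ (-β) = 2 ^ (-β) * v ^ (-(2*β)) := by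
    rw [Real.mul_rpow (by norm_num) (by positivity), h1]
  rw [← h2]
  apply Real.rpow_le_rpow_of_nonpos (one_add_sq_pos v) (by nlinarith) (by linarith)

lemma w_int (hβ : 1/2 < β) :
    IntegrableOn (fun v : ℝ => (1+v^2) ^ (-β)) (Set.Ioi 0) := by
  have h1 : IntegrableOn (fun v : ℝ => (1+v^2) ^ (-β)) (Set.Ioc 0 1) :=
    w_cont.integrableOn_Ioc
  have h2 : IntegrableOn (fun v : ℝ => v ^ (-(2*β))) (Set.Ioi 1) :=
    integrableOn_Ioi_rpow_of_lt (by linarith) one_pos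
  have h3 : IntegrableOn (fun v : ℝ => (1+v^2) ^ (-β)) (Set.Ioi 1) := by
    apply h2.mono' w_cont.aestronglyMeasurable.restrict
    filter_upwards [ae_restrict_mem measurableSet_Ioi] with v hv
    rw [Real.norm_eq_abs, abs_of_pos (w_pos v)]
    exact w_le hβ (le_of_lt hv)
  have := h1.union h3
  rwa [Set.Ioc_union_Ioi_eq_Ioi zero_le_one] at this

lemma w_int_Ioi (hβ : 1/2 < β) {x : ℝ} (hx : 0 ≤ x) :
    IntegrableOn (fun v : ℝ => (1+v^2) ^ (-β)) (Set.Ioi x) :=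
  (w_int hβ).mono_set (Set.Ioi_subset_Ioi hx)

lemma pow_int_Ioi (hβ : 1/2 < β) {x : ℝ} (hx : 0 < x) :
    IntegrableOn (fun v : ℝ => v ^ (-(2*β))) (Set.Ioi x) :=
  integrableOn_Ioi_rpow_of_lt (by linarith) hx

lemma tail_upper (hβ : 1/2 < β) {x : ℝ} (hx : 1 ≤ x) :
    (∫ v in Set.Ioi x, (1+v^2) ^ (-β)) ≤ x ^ (1-2*β) / (2*β-1) := by
  have hx0 : (0:ℝ) < x := lt_of_lt_of_le one_pos hx
  have h1 : (∫ v in Set.Ioi x, (1+v^2) ^ (-β)) ≤ ∫ v in Set.Ioi x, v ^ (-(2*β)) := by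
    apply setIntegral_mono_on (w_int_Ioi hβ hx0.le) (pow_int_Ioi hβ hx0) measurableSet_Ioi
    intro v hv
    exact w_le hβ (hx.trans (le_of_lt hv))
  have h2 : (∫ v in Set.Ioi x, v ^ (-(2*β))) = x ^ (1-2*β) / (2*β-1) := by
    rw [integral_Ioi_rpow_of_lt (by linarith) hx0, show -(2*β) + 1 = 1-2*β by ring,
      div_eq_div_iff (by linarith : (1-2*β) ≠ 0) (by linarith : (2*β-1) ≠ 0)]
    ring
  linarith [h1, le_of_eq h2]

lemma tail_lower (hβ : 1/2 < β) {x : ℝ} (hx : 1 ≤ x) :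
    2 ^ (-β) * x ^ (1-2*β) / (2*β-1) ≤ ∫ v in Set.Ioi x, (1+v^2) ^ (-β) := by
  have hx0 : (0:ℝ) < x := lt_of_lt_of_le one_pos hx
  have h1 : (∫ v in Set.Ioi x, (2:ℝ) ^ (-β) * v ^ (-(2*β)))
      ≤ ∫ v in Set.Ioi x, (1+v^2) ^ (-β) := by
    apply setIntegral_mono_on ((pow_int_Ioi hβ hx0).const_mul _) (w_int_Ioi hβ hx0.le)
      measurableSet_Ioi
    intro v hv
    exact ge_w hβ (hx.trans (le_of_lt hv))
  have h2 : (∫ v in Set.Ioi x, (2:ℝ) ^ (-β) * v ^ (-(2*β)))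
      = 2 ^ (-β) * (x ^ (1-2*β) / (2*β-1)) := by
    rw [MeasureTheory.integral_const_mul, integral_Ioi_rpow_of_lt (by linarith) hx0,
      show -(2*β) + 1 = 1-2*β by ring]
    congr 1
    rw [div_eq_div_iff (by linarith : (1-2*β) ≠ 0) (by linarith : (2*β-1) ≠ 0)]
    ring
  calc 2 ^ (-β) * x ^ (1-2*β) / (2*β-1) = 2 ^ (-β) * (x ^ (1-2*β) / (2*β-1)) := by ring
    _ = _ := h2.symm
    _ ≤ _ := h1

lemma tail_est (hβ : 1/2 < β) : ∃ c₂ c₃ : ℝ, 0 < c₂ ∧ 0 < c₃ ∧ ∀ x : ℝ, 0 ≤ x →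
    c₂ * (1+x) ^ (1-2*β) ≤ (∫ v in Set.Ioi x, (1+v^2) ^ (-β)) ∧
    (∫ v in Set.Ioi x, (1+v^2) ^ (-β)) ≤ c₃ * (1+x) ^ (1-2*β) := by
  have hb1 : (0:ℝ) < 2*β-1 := by linarith
  have h2b : (0:ℝ) < (2:ℝ) ^ (-β) := Real.rpow_pos_of_pos two_pos _
  have h2c : (0:ℝ) < (2:ℝ) ^ (2*β-1) := Real.rpow_pos_of_pos two_pos _
  set Itot := ∫ v in Set.Ioi (0:ℝ), (1+v^2) ^ (-β) with hItot
  have hItot0 : 0 ≤ Itot := setIntegral_nonneg measurableSet_Ioi (fun v _ => (w_pos v).le)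
  have hθ : 1-2*β < 0 := by linarith
  refine ⟨(2:ℝ) ^ (-β) / (2*β-1), (2:ℝ) ^ (2*β-1) * max (1/(2*β-1)) Itot,
    by positivity, by positivity, fun x hx => ?_⟩
  rcases le_or_gt 1 x with hx1 | hx1
  · have hxpos : (0:ℝ) < x := lt_of_lt_of_le one_pos hx1
    have key : x ^ (1-2*β) ≤ (2:ℝ) ^ (2*β-1) * (1+x) ^ (1-2*β) := by
      have h1 : ((2*x:ℝ)) ^ (1-2*β) ≤ (1+x) ^ (1-2*β) :=
        Real.rpow_le_rpow_of_nonpos (by positivity) (by linarith) hθ.le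
      have h2 : ((2*x:ℝ)) ^ (1-2*β) = (2:ℝ) ^ (1-2*β) * x ^ (1-2*β) :=
        Real.mul_rpow (by norm_num) hxpos.le
      have h3 : (2:ℝ) ^ (2*β-1) * (2:ℝ) ^ (1-2*β) = 1 := by
        rw [← Real.rpow_add two_pos]; norm_num
      calc x ^ (1-2*β) = ((2:ℝ) ^ (2*β-1) * (2:ℝ) ^ (1-2*β)) * x ^ (1-2*β) := by
            rw [h3, one_mul]
        _ = (2:ℝ) ^ (2*β-1) * ((2*x) ^ (1-2*β)) := by rw [h2]; ring
        _ ≤ (2:ℝ) ^ (2*β-1) * (1+x) ^ (1-2*β) := mul_le_mul_of_nonneg_left h1 h2c.le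
    constructor
    · calc (2:ℝ) ^ (-β) / (2*β-1) * (1+x) ^ (1-2*β)
          ≤ (2:ℝ) ^ (-β) / (2*β-1) * x ^ (1-2*β) := by
            apply mul_le_mul_of_nonneg_left _ (by positivity)
            exact Real.rpow_le_rpow_of_nonpos hxpos (by linarith) hθ.le
        _ = (2:ℝ) ^ (-β) * x ^ (1-2*β) / (2*β-1) := by ring
        _ ≤ _ := tail_lower hβ hx1
    · calc (∫ v in Set.Ioi x, (1+v^2) ^ (-β)) ≤ x ^ (1-2*β) / (2*β-1) := tail_upper hβ hx1
        _ ≤ (2:ℝ) ^ (2*β-1) * (1+x) ^ (1-2*β) / (2*β-1) := by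
            gcongr
        _ = ((2:ℝ) ^ (2*β-1) * (1/(2*β-1))) * (1+x) ^ (1-2*β) := by ring
        _ ≤ ((2:ℝ) ^ (2*β-1) * max (1/(2*β-1)) Itot) * (1+x) ^ (1-2*β) := by
            apply mul_le_mul_of_nonneg_right _ (Real.rpow_nonneg (by linarith) _)
            exact mul_le_mul_of_nonneg_left (le_max_left _ _) h2c.le
  · have hbase : (0:ℝ) < 1 + x := by linarith
    have hT1x : (∫ v in Set.Ioi (1:ℝ), (1+v^2) ^ (-β)) ≤ ∫ v in Set.Ioi x, (1+v^2) ^ (-β) :=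
      setIntegral_mono_set (w_int_Ioi hβ hx) (Filter.Eventually.of_forall (fun v => (w_pos v).le))
        (HasSubset.Subset.eventuallyLE (Set.Ioi_subset_Ioi hx1.le))
    have hTx0 : (∫ v in Set.Ioi x, (1+v^2) ^ (-β)) ≤ Itot :=
      setIntegral_mono_set (w_int hβ) (Filter.Eventually.of_forall (fun v => (w_pos v).le))
        (HasSubset.Subset.eventuallyLE (Set.Ioi_subset_Ioi hx))
    constructor
    · have h1 : ((1+x:ℝ)) ^ (1-2*β) ≤ 1 :=
        Real.rpow_le_one_of_one_le_of_nonpos (by linarith) hθ.le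
      have h2 : (2:ℝ) ^ (-β) / (2*β-1) ≤ ∫ v in Set.Ioi (1:ℝ), (1+v^2) ^ (-β) := by
        have := tail_lower hβ (le_refl (1:ℝ))
        rwa [Real.one_rpow, mul_one] at this
      calc (2:ℝ) ^ (-β) / (2*β-1) * (1+x) ^ (1-2*β)
          ≤ (2:ℝ) ^ (-β) / (2*β-1) * 1 := mul_le_mul_of_nonneg_left h1 (by positivity)
        _ = (2:ℝ) ^ (-β) / (2*β-1) := mul_one _
        _ ≤ ∫ v in Set.Ioi (1:ℝ), (1+v^2) ^ (-β) := h2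
        _ ≤ _ := hT1x
    · have h1 : ((2:ℝ)) ^ (1-2*β) ≤ (1+x) ^ (1-2*β) :=
        Real.rpow_le_rpow_of_nonpos hbase (by linarith) hθ.le
      have h3 : (2:ℝ) ^ (2*β-1) * (2:ℝ) ^ (1-2*β) = 1 := by
        rw [← Real.rpow_add two_pos]; norm_num
      calc (∫ v in Set.Ioi x, (1+v^2) ^ (-β)) ≤ Itot := hTx0
        _ ≤ max (1/(2*β-1)) Itot := le_max_right _ _
        _ = ((2:ℝ) ^ (2*β-1) * max (1/(2*β-1)) Itot) * (2:ℝ) ^ (1-2*β) := by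
            linear_combination (-(max (1/(2*β-1)) Itot)) * h3
        _ ≤ ((2:ℝ) ^ (2*β-1) * max (1/(2*β-1)) Itot) * (1+x) ^ (1-2*β) := by
            apply mul_le_mul_of_nonneg_left h1
            positivity

end psi


lemma conv_exp {θ : ℝ} (hθ : θ < 0) {c d : ℝ} (hc : 0 < c) (hd : 0 < d) (σ : ℝ) :
    ∃ K : ℝ, 0 ≤ K ∧ ∀ a t : ℝ, 1 ≤ a → 0 < t → c * a ^ θ ≤ t → t ≤ d * a ^ θ →
      a ^ σ ≤ K * t ^ (σ/θ) := by
  have hθ0 : θ ≠ 0 := hθ.ne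
  rcases le_or_gt 0 σ with hσ | hσ
  · refine ⟨d ^ (-(σ/θ)), Real.rpow_nonneg hd.le _, fun a t ha ht h1 h2 => ?_⟩
    have ha0 : (0:ℝ) < a := lt_of_lt_of_le one_pos ha
    have hq : σ/θ ≤ 0 := div_nonpos_of_nonneg_of_nonpos hσ hθ.le
    have h3 : (d * a ^ θ) ^ (σ/θ) ≤ t ^ (σ/θ) := Real.rpow_le_rpow_of_nonpos ht h2 hq
    have h4 : (d * a ^ θ) ^ (σ/θ) = d ^ (σ/θ) * a ^ σ := by
      rw [Real.mul_rpow hd.le (Real.rpow_nonneg ha0.le _), ← Real.rpow_mul ha0.le]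
      rw [show θ * (σ/θ) = σ by field_simp]
    have h5 : d ^ (-(σ/θ)) * d ^ (σ/θ) = 1 := by
      rw [← Real.rpow_add hd]; simp
    calc a ^ σ = d ^ (-(σ/θ)) * (d ^ (σ/θ) * a ^ σ) := by rw [← mul_assoc, h5, one_mul]
      _ = d ^ (-(σ/θ)) * ((d * a ^ θ) ^ (σ/θ)) := by rw [h4]
      _ ≤ d ^ (-(σ/θ)) * t ^ (σ/θ) :=
          mul_le_mul_of_nonneg_left h3 (Real.rpow_nonneg hd.le _)
  · refine ⟨c ^ (-(σ/θ)), Real.rpow_nonneg hc.le _, fun a t ha ht h1 h2 => ?_⟩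
    have ha0 : (0:ℝ) < a := lt_of_lt_of_le one_pos ha
    have hq : 0 ≤ σ/θ := le_of_lt (div_pos_iff.mpr (Or.inr ⟨hσ, hθ⟩))
    have h3 : (c * a ^ θ) ^ (σ/θ) ≤ t ^ (σ/θ) :=
      Real.rpow_le_rpow (by positivity) h1 hq
    have h4 : (c * a ^ θ) ^ (σ/θ) = c ^ (σ/θ) * a ^ σ := by
      rw [Real.mul_rpow hc.le (Real.rpow_nonneg ha0.le _), ← Real.rpow_mul ha0.le]
      rw [show θ * (σ/θ) = σ by field_simp]
    have h5 : c ^ (-(σ/θ)) * c ^ (σ/θ) = 1 := by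
      rw [← Real.rpow_add hc]; simp
    calc a ^ σ = c ^ (-(σ/θ)) * (c ^ (σ/θ) * a ^ σ) := by rw [← mul_assoc, h5, one_mul]
      _ = c ^ (-(σ/θ)) * ((c * a ^ θ) ^ (σ/θ)) := by rw [h4]
      _ ≤ c ^ (-(σ/θ)) * t ^ (σ/θ) :=
          mul_le_mul_of_nonneg_left h3 (Real.rpow_nonneg hc.le _)

end WarpAux

open WarpAux

/-- Derivative estimates for the warped Fourier transform
`g(u) = F(φ(u)) (φ'(u))^{(α+1)/2}` on `(-π/2, π/2)`: if `F` is `m` times differentiable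
with `|F^{(j)}(ω)| ≤ C(1+|ω|)^{-(μ+j)}` for `0 ≤ j ≤ m`, then `g` is `m` times
differentiable and `|g^{(k)}(u)| ≤ C_k (π/2-|u|)^{(μ-β(α+1))/(2β-1)-k}` for `0 ≤ k ≤ m`. -/
theorem warped_signal_derivative_bounds (β α μ : ℝ) (m : ℕ)
    (hβ : 1 / 2 < β) (hα : 0 ≤ α) (hm : 0 < m) (hμ : 0 < μ) (c₁ : ℝ)
    (hc₁ : c₁ = (Real.pi / 2) / ∫ v in Set.Ioi (0 : ℝ), (1 + v ^ 2) ^ (-β))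
    (ψ : ℝ → ℝ)
    (hψ : ∀ ω : ℝ, ψ ω = c₁ * ∫ v in (0 : ℝ)..ω, (1 + v ^ 2) ^ (-β))
    (φ : ℝ → ℝ) (hφ : ∀ ω : ℝ, φ (ψ ω) = ω)
    (F : ℝ → ℂ) (C : ℝ)
    (hFdiff : ∀ j < m, Differentiable ℝ (iteratedDeriv j F))
    (hFbd : ∀ j ≤ m, ∀ ω : ℝ, ‖iteratedDeriv j F ω‖ ≤ C * (1 + |ω|) ^ (-(μ + j)))
    (g : ℝ → ℂ)
    (hg : ∀ u ∈ Set.Ioo (-(Real.pi / 2)) (Real.pi / 2),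
      g u = F (φ u) * (((deriv φ u) ^ ((α + 1) / 2) : ℝ) : ℂ)) :
    (∀ j < m, DifferentiableOn ℝ
        (iteratedDerivWithin j g (Set.Ioo (-(Real.pi / 2)) (Real.pi / 2)))
        (Set.Ioo (-(Real.pi / 2)) (Real.pi / 2))) ∧
      ∀ k ≤ m, ∃ Ck : ℝ,
        ∀ u ∈ Set.Ioo (-(Real.pi / 2)) (Real.pi / 2),
          ‖iteratedDerivWithin k g (Set.Ioo (-(Real.pi / 2)) (Real.pi / 2)) u‖ ≤
            Ck * (Real.pi / 2 - |u|) ^ ((μ - β * (α + 1)) / (2 * β - 1) - k) := by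
  set I : Set ℝ := Set.Ioo (-(Real.pi / 2)) (Real.pi / 2) with hI
  have hIopen : IsOpen I := isOpen_Ioo
  have hpi2 : (0:ℝ) < Real.pi / 2 := by positivity
  have hb1 : (0:ℝ) < 2*β - 1 := by linarith
  -- tail estimates
  obtain ⟨c₂, c₃, hc₂, hc₃, htail⟩ := tail_est hβ
  set Itot := ∫ v in Set.Ioi (0:ℝ), (1+v^2) ^ (-β) with hItotdef
  have hItot_pos : 0 < Itot := by
    have := (htail 0 le_rfl).1
    have h1 : ((1:ℝ)+0) ^ (1-2*β) = 1 := by norm_num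
    rw [h1, mul_one] at this
    linarith
  have hc₁pos : 0 < c₁ := by rw [hc₁]; exact div_pos hpi2 hItot_pos
  have hpieq : c₁ * Itot = Real.pi / 2 := by
    rw [hc₁]; field_simp
  -- derivative of ψ
  have hψd : ∀ x : ℝ, HasDerivAt ψ (c₁ * (1+x^2) ^ (-β)) x := by
    intro x
    have hψfun : ψ = fun ω => c₁ * ∫ v in (0:ℝ)..ω, (1+v^2) ^ (-β) := funext hψ
    rw [hψfun]
    exact ((w_cont.integral_hasStrictDerivAt 0 x).hasDerivAt).const_mul c₁
  have hψcont : Continuous ψ := by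
    have : Differentiable ℝ ψ := fun x => (hψd x).differentiableAt
    exact this.continuous
  have hψmono : StrictMono ψ := by
    apply strictMono_of_deriv_pos
    intro x
    rw [(hψd x).deriv]
    have := w_pos (β := β) x
    positivity
  have hψ0 : ψ 0 = 0 := by rw [hψ]; simp
  have hψodd : ∀ x : ℝ, ψ (-x) = - ψ x := by
    intro x
    rw [hψ, hψ]
    have h1 : (∫ v in (0:ℝ)..(-x), (1+v^2) ^ (-β))
        = ∫ v in (0:ℝ)..(-x), (1+(-v)^2) ^ (-β) := by
      congr 1; funext v; norm_num
    have h2 := intervalIntegral.integral_comp_neg (a := (0:ℝ)) (b := -x)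
      (fun v => (1+v^2) ^ (-β))
    rw [h1, h2]
    simp only [neg_neg, neg_zero]
    rw [intervalIntegral.integral_symm]
    ring
  -- key identity : π/2 - ψ x = c₁ * tail for x ≥ 0
  have hkey : ∀ x : ℝ, 0 ≤ x →
      Real.pi / 2 - ψ x = c₁ * ∫ v in Set.Ioi x, (1+v^2) ^ (-β) := by
    intro x hx
    have hsplit : Itot = (∫ v in Set.Ioc 0 x, (1+v^2) ^ (-β))
        + ∫ v in Set.Ioi x, (1+v^2) ^ (-β) := by
      rw [hItotdef, ← Set.Ioc_union_Ioi_eq_Ioi hx]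
      exact setIntegral_union (Set.Ioc_disjoint_Ioi le_rfl) measurableSet_Ioi
        (((w_int hβ)).mono_set (by rw [← Set.Ioc_union_Ioi_eq_Ioi hx]; exact Set.subset_union_left))
        (w_int_Ioi hβ hx)
    have hψx : ψ x = c₁ * ∫ v in Set.Ioc 0 x, (1+v^2) ^ (-β) := by
      rw [hψ, intervalIntegral.integral_of_le hx]
    rw [hψx, ← hpieq, hsplit]
    ring
  have htailpos : ∀ x : ℝ, 0 ≤ x → 0 < ∫ v in Set.Ioi x, (1+v^2) ^ (-β) := by
    intro x hx
    have := (htail x hx).1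
    have h1 : 0 < c₂ * (1+x) ^ (1-2*β) := by positivity
    linarith
  have hψlt : ∀ x : ℝ, ψ x ∈ I := by
    have hnn : ∀ x : ℝ, 0 ≤ x → ψ x ∈ I := by
      intro x hx
      constructor
      · have : 0 ≤ ψ x := by rw [← hψ0]; exact hψmono.monotone hx
        linarith
      · have := hkey x hx
        have h2 := htailpos x hx
        nlinarith
    intro x
    rcases le_or_gt 0 x with hx | hx
    · exact hnn x hx
    · have := hnn (-x) (by linarith)
      rw [hψodd] at this
      obtain ⟨h1, h2⟩ := this
      exact ⟨by linarith, by linarith⟩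
  -- surjectivity onto I
  have hsurj : ∀ u ∈ I, ∃ x : ℝ, ψ x = u := by
    have hsurj0 : ∀ u : ℝ, 0 ≤ u → u < Real.pi / 2 → ∃ x : ℝ, ψ x = u := by
      intro u hu1 hu2
      have htend : Tendsto ψ atTop (𝓝 (Real.pi / 2)) := by
        have h1 := intervalIntegral_tendsto_integral_Ioi (0:ℝ) (w_int hβ)
          (tendsto_id (α := ℝ) (x := atTop))
        have h2 : Tendsto (fun x : ℝ => c₁ * ∫ v in (0:ℝ)..x, (1+v^2) ^ (-β)) atTop
            (𝓝 (c₁ * Itot)) := h1.const_mul c₁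
        rw [hpieq] at h2
        exact h2.congr (fun x => (hψ x).symm)
      obtain ⟨x₀, hx₀⟩ := (htend.eventually (eventually_gt_nhds hu2)).exists
      have h0x₀ : (0:ℝ) ≤ x₀ := by
        by_contra hcon
        push_neg at hcon
        have : ψ x₀ < ψ 0 := hψmono hcon
        rw [hψ0] at this
        linarith
      have := intermediate_value_Icc h0x₀ (hψcont.continuousOn (s := Set.Icc 0 x₀))
      have hmem : u ∈ Set.Icc (ψ 0) (ψ x₀) := by
        rw [hψ0]; exact ⟨hu1, hx₀.le⟩
      obtain ⟨x, _, hxval⟩ := this hmem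
      exact ⟨x, hxval⟩
    intro u hu
    rcases le_or_gt 0 u with hu0 | hu0
    · exact hsurj0 u hu0 hu.2
    · obtain ⟨x, hx⟩ := hsurj0 (-u) (by linarith) (by have := hu.1; linarith)
      exact ⟨-x, by rw [hψodd, hx, neg_neg]⟩
  have hφψ : ∀ u ∈ I, ψ (φ u) = u := by
    intro u hu
    obtain ⟨x, hx⟩ := hsurj u hu
    rw [← hx, hφ]
  -- continuity of φ on I
  have hφcont : ∀ u ∈ I, ContinuousAt φ u := by
    intro u hu
    rw [Metric.continuousAt_iff]
    intro ε hε
    set x₀ := φ u with hx₀def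
    have hx₀ : ψ x₀ = u := hφψ u hu
    set a := ψ (x₀ - ε/2) with hadef
    set b := ψ (x₀ + ε/2) with hbdef
    have hau : a < u := by rw [← hx₀]; exact hψmono (by linarith)
    have hub : u < b := by rw [← hx₀]; exact hψmono (by linarith)
    refine ⟨min (u - a) (b - u), by simp [hau, hub], fun {y} hy => ?_⟩
    rw [Real.dist_eq] at hy
    have hy1 : a < y := by
      have h1 := abs_lt.mp hy
      have := min_le_left (u - a) (b - u)
      linarith [h1.1]
    have hy2 : y < b := by
      have h1 := abs_lt.mp hy
      have := min_le_right (u - a) (b - u)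
      linarith [h1.2]
    have hyI : y ∈ I := by
      have ha' := hψlt (x₀ - ε/2)
      have hb' := hψlt (x₀ + ε/2)
      exact ⟨lt_of_le_of_lt ha'.1.le hy1, lt_of_lt_of_le hy2 hb'.2.le⟩
    have hψφy : ψ (φ y) = y := hφψ y hyI
    have hl : x₀ - ε/2 < φ y := by
      apply hψmono.lt_iff_lt.mp
      rw [hψφy]; exact hy1
    have hr : φ y < x₀ + ε/2 := by
      apply hψmono.lt_iff_lt.mp
      rw [hψφy]; exact hy2
    rw [Real.dist_eq]
    rw [abs_lt]
    constructor <;> [linarith; linarith]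
  -- derivative of φ
  set lam : ℝ → ℝ := fun x => (c₁ * (1+x^2) ^ (-β))⁻¹ with hlamdef
  have hlampos : ∀ x : ℝ, 0 < lam x := by
    intro x
    have := w_pos (β := β) x
    positivity
  have hφd : ∀ u ∈ I, HasDerivAt φ (lam (φ u)) u := by
    intro u hu
    apply HasDerivAt.of_local_left_inverse (hφcont u hu) (hψd (φ u))
    · have := w_pos (β := β) (φ u); positivity
    · filter_upwards [hIopen.mem_nhds hu] with y hy
      exact hφψ y hy
  have hφderiv : ∀ u ∈ I, deriv φ u = lam (φ u) := fun u hu => (hφd u hu).deriv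
  -- symbol estimates for lam and its power
  have hlam_eq : lam = fun x => c₁⁻¹ * (1+x^2) ^ β := by
    funext x
    show (c₁ * (1+x^2) ^ (-β))⁻¹ = _
    rw [mul_inv, Real.rpow_neg (one_add_sq_pos x).le, inv_inv]
  have hlamSmR : SmR (2*β) lam := by
    rw [hlam_eq]
    have h1 := (q_SmR β).const_mul c₁⁻¹
    exact h1
  set γ : ℝ := (α+1)/2 with hγdef
  set Lam : ℝ → ℝ := fun x => (lam x) ^ γ with hLamdef
  have hLam_eq : Lam = fun x => (c₁⁻¹) ^ γ * (1+x^2) ^ (β*γ) := by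
    funext x
    show (lam x) ^ γ = _
    simp only [hlam_eq]
    rw [Real.mul_rpow (by positivity) (Real.rpow_nonneg (one_add_sq_pos x).le _),
      ← Real.rpow_mul (one_add_sq_pos x).le]
  have hLamSmR : SmR (β*(α+1)) Lam := by
    have h1 := (q_SmR (β*γ)).const_mul ((c₁⁻¹) ^ γ)
    rw [← hLam_eq] at h1
    have h2 : 2*(β*γ) = β*(α+1) := by rw [hγdef]; ring
    rw [h2] at h1
    exact h1
  -- the sequence of x-side derivatives
  set h0 : ℝ → ℂ := fun x => ((Lam x : ℝ) : ℂ) * F x with hh0def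
  set Dop : (ℝ → ℂ) → (ℝ → ℂ) := fun h x => ((lam x : ℝ) : ℂ) * _root_.deriv h x
    with hDopdef
  set hseq : ℕ → ℝ → ℂ := fun k => Dop^[k] h0 with hhseqdef
  have hseq_succ : ∀ k, hseq (k+1) = Dop (hseq k) := by
    intro k
    rw [hhseqdef]
    exact Function.iterate_succ_apply' Dop k h0
  have hFDk : Dk m (-μ) F := by
    constructor
    · exact hFdiff
    · intro j hj
      refine ⟨max C 0, le_max_right _ _, fun x => ?_⟩
      have h1 := hFbd j hj x
      have h2 : -(μ + (j:ℝ)) = -μ - (j:ℝ) := by ring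
      rw [h2] at h1
      exact h1.trans (mul_le_mul_of_nonneg_right (le_max_left _ _)
        (Real.rpow_nonneg (base_pos x).le _))
  have hinv : ∀ k, k ≤ m → Dk (m - k) (β*(α+1) - μ + k*(2*β-1)) (hseq k) := by
    intro k
    induction k with
    | zero =>
      intro _
      have h1 := Dk.mul (hLamSmR.toSm) m hFDk
      have h2 : hseq 0 = fun x => ((Lam x : ℝ) : ℂ) * F x := rfl
      rw [h2]
      exact (h1.congr_exp (by push_cast; ring)).of_le (by omega)
    | succ k ih =>
      intro hk1
      have hk : k ≤ m := Nat.le_of_succ_le hk1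
      have h1 := ih hk
      have hms : m - k = (m - (k+1)) + 1 := by omega
      rw [hms] at h1
      have h2 := h1.deriv
      have h3 := Dk.mul (hlamSmR.toSm) (m - (k+1)) h2
      have h4 : hseq (k+1) = fun x => ((lam x : ℝ) : ℂ) * _root_.deriv (hseq k) x := by
        rw [hseq_succ k]
      rw [h4]
      exact h3.congr_exp (by push_cast; ring)
  have hseq_diff : ∀ k, k < m → Differentiable ℝ (hseq k) := by
    intro k hk
    have := (hinv k hk.le).1 0 (by omega)
    rwa [iteratedDeriv_zero] at this
  have htrans : ∀ k, k ≤ m → ∀ u ∈ I, iteratedDerivWithin k g I u = hseq k (φ u) := by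
    intro k
    induction k with
    | zero =>
      intro _ u hu
      rw [iteratedDerivWithin_zero, hg u hu, hφderiv u hu]
      have h2 : hseq 0 (φ u) = ((Lam (φ u) : ℝ) : ℂ) * F (φ u) := rfl
      rw [h2, mul_comm]
    | succ k ih =>
      intro hk1 u hu
      have hk : k ≤ m := Nat.le_of_succ_le hk1
      have hkm : k < m := hk1
      have heq : iteratedDerivWithin k g I =ᶠ[𝓝 u] fun y => hseq k (φ y) := by
        filter_upwards [hIopen.mem_nhds hu] with y hy
        exact ih hk y hy
      rw [iteratedDerivWithin_succ,
        derivWithin_of_isOpen hIopen hu, heq.deriv_eq]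
      have h1 : HasDerivAt (hseq k) (_root_.deriv (hseq k) (φ u)) (φ u) :=
        ((hseq_diff k hkm) (φ u)).hasDerivAt
      have h2 := hφd u hu
      have h3 := HasDerivAt.scomp u h1 h2
      have h4 : _root_.deriv (fun y => hseq k (φ y)) u
          = lam (φ u) • _root_.deriv (hseq k) (φ u) := h3.deriv
      rw [h4, hseq_succ k]
      show lam (φ u) • _root_.deriv (hseq k) (φ u)
          = ((lam (φ u) : ℝ) : ℂ) * _root_.deriv (hseq k) (φ u)
      rw [Complex.real_smul]
  constructor
  · intro j hj u hu
    have heq : iteratedDerivWithin j g I =ᶠ[𝓝 u] fun y => hseq j (φ y) := by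
      filter_upwards [hIopen.mem_nhds hu] with y hy
      exact htrans j hj.le y hy
    have hdiff : DifferentiableAt ℝ (fun y => hseq j (φ y)) u :=
      DifferentiableAt.comp u ((hseq_diff j hj) (φ u)) (hφd u hu).differentiableAt
    exact ((heq.differentiableAt_iff).mpr hdiff).differentiableWithinAt
  · intro k hk
    obtain ⟨CB, hCB0, hCB⟩ := (hinv k hk).2 0 (Nat.zero_le _)
    have hθneg : 1-2*β < 0 := by linarith
    obtain ⟨K, hK0, hKconv⟩ := conv_exp hθneg (mul_pos hc₁pos hc₂) (mul_pos hc₁pos hc₃)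
      (β*(α+1) - μ + k*(2*β-1))
    refine ⟨CB * K, fun u hu => ?_⟩
    rw [htrans k hk u hu]
    have hy0 : (0:ℝ) ≤ |φ u| := abs_nonneg _
    have habs : |u| = ψ (|φ u|) := by
      conv_lhs => rw [← hφψ u hu]
      rcases le_or_gt 0 (φ u) with h | h
      · rw [abs_of_nonneg (by rw [← hψ0]; exact hψmono.monotone h), abs_of_nonneg h]
      · have h2 : ψ (φ u) < 0 := by rw [← hψ0]; exact hψmono h
        rw [abs_of_neg h2, abs_of_neg h, hψodd]
    have hid : Real.pi/2 - |u| = c₁ * ∫ v in Set.Ioi (|φ u|), (1+v^2) ^ (-β) := by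
      rw [habs]; exact hkey _ hy0
    have ht0 : 0 < Real.pi/2 - |u| := by
      rw [hid]; exact mul_pos hc₁pos (htailpos _ hy0)
    have hlow : (c₁*c₂) * (1+|φ u|) ^ (1-2*β) ≤ Real.pi/2 - |u| := by
      rw [hid, mul_assoc]
      exact mul_le_mul_of_nonneg_left (htail _ hy0).1 hc₁pos.le
    have hhigh : Real.pi/2 - |u| ≤ (c₁*c₃) * (1+|φ u|) ^ (1-2*β) := by
      rw [hid, mul_assoc]
      exact mul_le_mul_of_nonneg_left (htail _ hy0).2 hc₁pos.le
    have hconv := hKconv (1+|φ u|) (Real.pi/2 - |u|) (by linarith) ht0 hlow hhigh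
    have hbound := hCB (φ u)
    rw [iteratedDeriv_zero] at hbound
    have hexp : (β*(α+1) - μ + k*(2*β-1)) / (1-2*β) = (μ - β*(α+1))/(2*β-1) - k := by
      have hne1 : (1-2*β) ≠ 0 := by linarith
      have hne2 : (2*β-1) ≠ 0 := by linarith
      have h3 : (β*(α+1) - μ + k*(2*β-1)) / (1-2*β) = -((β*(α+1) - μ + k*(2*β-1)) / (2*β-1)) := by
        rw [← div_neg]; congr 1; ring
      rw [h3, add_div, mul_div_assoc, div_self hne2]; ring
    calc ‖hseq k (φ u)‖
        ≤ CB * (1+|φ u|) ^ (β*(α+1) - μ + k*(2*β-1) - (0:ℕ)) := hbound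
      _ = CB * (1+|φ u|) ^ (β*(α+1) - μ + k*(2*β-1)) := by norm_num
      _ ≤ CB * (K * (Real.pi/2 - |u|) ^ ((β*(α+1) - μ + k*(2*β-1))/(1-2*β))) :=
          mul_le_mul_of_nonneg_left hconv hCB0
      _ = (CB * K) * (Real.pi/2 - |u|) ^ ((μ - β*(α+1))/(2*β-1) - k) := by
          rw [hexp]; ring
end
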